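/- arXiv:2405.05744 — 10 statements merged into one kernel-verified Lean document; each statement's English description precedes it below -/
import Mathlib

section
/- Suppose f is a weakly convex differentiable real function on the interval [p̄, 1], a and b are strictly positive reals, f(p̄) = a·p̄ + b, and f′(p̄) = a. Then the function x ↦ f(x)/(a·x + b) is weakly increasing on [p̄, 1]. -/
/-- If `f` is weakly convex and differentiable on `[p̄, 1]`,
`a, b > 0`, `f p̄ = a * p̄ + b` and `f' p̄ = a`, then `x ↦ f x / (a * x + b)`
is weakly increasing on `[p̄, 1]`. -/
theorem stmt_1 (pbar : ℝ) (hp0 : 0 < pbar) (hp1 : pbar < 1)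
    (f : ℝ → ℝ) (a b : ℝ) (ha : 0 < a) (hb : 0 < b)
    (hconv : ConvexOn ℝ (Set.Icc pbar 1) f)
    (hdiff : DifferentiableOn ℝ f (Set.Icc pbar 1))
    (hfp : f pbar = a * pbar + b)
    (hderiv : HasDerivWithinAt f a (Set.Icc pbar 1) pbar) :
    MonotoneOn (fun x => f x / (a * x + b)) (Set.Icc pbar 1) := by
  have hpmem : pbar ∈ Set.Icc pbar 1 := ⟨le_refl _, hp1.le⟩
  -- key fact: f y ≥ a * y + b for all y in [pbar, 1]
  have key : ∀ y ∈ Set.Icc pbar 1, a * y + b ≤ f y := by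
    intro y hy
    rcases eq_or_lt_of_le hy.1 with h | h
    · rw [← h, hfp]
    · have hs := hconv.le_slope_of_hasDerivWithinAt hpmem hy h hderiv
      rw [slope_def_field] at hs
      have hyp : 0 < y - pbar := by linarith
      rw [le_div_iff₀ hyp] at hs
      nlinarith
  intro x hx y hy hxy
  have hpos : ∀ z ∈ Set.Icc pbar 1, 0 < a * z + b := fun z hz => by nlinarith [hz.1]
  have hxp := hpos x hx
  have hyp := hpos y hy
  rcases eq_or_lt_of_le hxy with rfl | hxy
  · exact le_refl _
  -- x < y, so pbar < y; write x = t * pbar + (1-t) * y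
  have hpy : pbar < y := lt_of_le_of_lt hx.1 hxy
  set t : ℝ := (y - x) / (y - pbar) with ht
  have hyp0 : 0 < y - pbar := by linarith
  have ht0 : 0 ≤ t := div_nonneg (by linarith) hyp0.le
  have ht1 : 1 - t = (x - pbar) / (y - pbar) := by
    field_simp [ht]
    rw [ht, sub_mul, div_mul_cancel₀ _ hyp0.ne']; ring
  have ht1' : 0 ≤ 1 - t := by rw [ht1]; exact div_nonneg (by linarith [hx.1]) hyp0.le
  have hcomb : t • pbar + (1 - t) • y = x := by
    field_simp [ht, smul_eq_mul]
    rw [ht, smul_eq_mul, smul_eq_mul, show (y - x) / (y - pbar) * pbar + (1 - (y - x) / (y - pbar)) * y = y - (y - x) / (y - pbar) * (y - pbar) by ring, div_mul_cancel₀ _ hyp0.ne']; ring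
  have hfx : f x ≤ t * f pbar + (1 - t) * f y := by
    have := hconv.2 hpmem hy ht0 ht1' (by ring)
    rw [hcomb] at this
    simpa [smul_eq_mul] using this
  simp only
  rw [div_le_div_iff₀ hxp hyp]
  have hkey := key y hy
  have hax : a * x + b = t * (a * pbar + b) + (1 - t) * (a * y + b) := by
    have : t * pbar + (1 - t) * y = x := by simpa [smul_eq_mul] using hcomb
    nlinarith [this]
  have htA : 0 ≤ t * (a * pbar + b) := mul_nonneg ht0 (by nlinarith)
  nlinarith [mul_nonneg htA (sub_nonneg.2 hkey), hfx, key x hx,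
    mul_le_mul_of_nonneg_right hfx hyp.le]
end

section
/- Let φ : [0,1] → ℝ be continuous, strictly positive on (0,1), and suppose ∫_{p̄}^{1} (b − p̄)·φ(b) db ≥ ∫_{0}^{p̄} (p̄ − b)·φ(b) db. Then for every l ∈ [0, p̄] there exists a unique r = r(l) ∈ [p̄, 1] satisfying the balance equation ∫_{p̄}^{r} (b − p̄)·φ(b) db = ∫_{l}^{p̄} (p̄ − b)·φ(b) db. -/
/-- If `φ` is continuous on `[0,1]`, strictly positive on `(0,1)`,
and `∫_{p̄}^1 (b - p̄) φ ≥ ∫_0^{p̄} (p̄ - b) φ`, then for every `l ∈ [0, p̄]`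
there is a unique `r ∈ [p̄, 1]` with `∫_{p̄}^r (b - p̄) φ = ∫_l^{p̄} (p̄ - b) φ`. -/
theorem stmt_2 (pbar : ℝ) (hpbar : pbar ∈ Set.Ioo (0:ℝ) 1)
    (φ : ℝ → ℝ) (hcont : ContinuousOn φ (Set.Icc 0 1))
    (hpos : ∀ b ∈ Set.Ioo (0:ℝ) 1, 0 < φ b)
    (hineq : (∫ b in (0:ℝ)..pbar, (pbar - b) * φ b) ≤ ∫ b in pbar..(1:ℝ), (b - pbar) * φ b) :
    ∀ l ∈ Set.Icc (0:ℝ) pbar,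
      ∃! r : ℝ, r ∈ Set.Icc pbar 1 ∧
        (∫ b in pbar..r, (b - pbar) * φ b) = ∫ b in l..pbar, (pbar - b) * φ b := by
  obtain ⟨hp0, hp1⟩ := hpbar
  intro l hl
  set g : ℝ → ℝ := fun b => (b - pbar) * φ b with hg
  set h : ℝ → ℝ := fun b => (pbar - b) * φ b with hh
  have hgcont : ContinuousOn g (Set.Icc 0 1) :=
    ((continuousOn_id.sub continuousOn_const)).mul hcont
  have hhcont : ContinuousOn h (Set.Icc 0 1) :=
    ((continuousOn_const.sub continuousOn_id)).mul hcont
  -- φ is nonnegative on [0,1] by continuity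
  have hnn : ∀ b ∈ Set.Icc (0:ℝ) 1, 0 ≤ φ b := by
    intro b hb
    have hcw : ContinuousWithinAt φ (Set.Ioo 0 1) b :=
      (hcont b hb).mono Set.Ioo_subset_Icc_self
    have hb' : b ∈ closure (Set.Ioo (0:ℝ) 1) := by
      rw [closure_Ioo (by norm_num : (0:ℝ) ≠ 1)]; exact hb
    have hne : (nhdsWithin b (Set.Ioo (0:ℝ) 1)).NeBot :=
      mem_closure_iff_nhdsWithin_neBot.mp hb'
    exact ge_of_tendsto hcw (eventually_nhdsWithin_of_forall fun x hx => (hpos x hx).le)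
  have hgint : ∀ x ∈ Set.Icc (0:ℝ) 1, ∀ y ∈ Set.Icc (0:ℝ) 1,
      IntervalIntegrable g MeasureTheory.volume x y := by
    intro x hx y hy
    exact (hgcont.mono (Set.uIcc_subset_Icc hx hy)).intervalIntegrable
  have hhint : ∀ x ∈ Set.Icc (0:ℝ) 1, ∀ y ∈ Set.Icc (0:ℝ) 1,
      IntervalIntegrable h MeasureTheory.volume x y := by
    intro x hx y hy
    exact (hhcont.mono (Set.uIcc_subset_Icc hx hy)).intervalIntegrable
  have hl01 : l ∈ Set.Icc (0:ℝ) 1 := ⟨hl.1, hl.2.trans hp1.le⟩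
  have hpmem : pbar ∈ Set.Icc (0:ℝ) 1 := ⟨hp0.le, hp1.le⟩
  have h1mem : (1:ℝ) ∈ Set.Icc (0:ℝ) 1 := ⟨by norm_num, le_refl _⟩
  have h0mem : (0:ℝ) ∈ Set.Icc (0:ℝ) 1 := ⟨le_refl _, by norm_num⟩
  set F : ℝ → ℝ := fun r => ∫ b in pbar..r, g b with hF
  set T : ℝ := ∫ b in l..pbar, h b with hT
  -- T ≥ 0
  have hTnn : 0 ≤ T := by
    apply intervalIntegral.integral_nonneg hl.2
    intro u hu
    exact mul_nonneg (sub_nonneg.2 hu.2)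
      (hnn u ⟨le_trans hl.1 hu.1, hu.2.trans hp1.le⟩)
  -- T ≤ F 1
  have hTle : T ≤ F 1 := by
    have hsplit : (∫ b in (0:ℝ)..l, h b) + (∫ b in l..pbar, h b)
        = ∫ b in (0:ℝ)..pbar, h b :=
      intervalIntegral.integral_add_adjacent_intervals (hhint 0 h0mem l hl01)
        (hhint l hl01 pbar hpmem)
    have h0l : 0 ≤ ∫ b in (0:ℝ)..l, h b := by
      apply intervalIntegral.integral_nonneg hl.1
      intro u hu
      exact mul_nonneg (sub_nonneg.2 (hu.2.trans hl.2))
        (hnn u ⟨hu.1, (hu.2.trans hl.2).trans hp1.le⟩)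
    have : T ≤ ∫ b in (0:ℝ)..pbar, h b := by
      rw [← hsplit]; linarith
    exact this.trans hineq
  -- F is continuous on [pbar, 1]
  have hFcont : ContinuousOn F (Set.Icc pbar 1) := by
    have huIcc : Set.uIcc pbar 1 = Set.Icc pbar 1 := Set.uIcc_of_le hp1.le
    have hint : MeasureTheory.IntegrableOn g (Set.Icc pbar 1) MeasureTheory.volume :=
      (hgcont.mono (Set.Icc_subset_Icc hp0.le le_rfl)).integrableOn_Icc
    have hc := intervalIntegral.continuousOn_primitive_interval
      (a := pbar) (b := 1) (f := g) (by rwa [huIcc])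
    rwa [huIcc] at hc
  -- F is strictly monotone on [pbar, 1]
  have hFmono : StrictMonoOn F (Set.Icc pbar 1) := by
    intro x hx y hy hxy
    have hx01 : x ∈ Set.Icc (0:ℝ) 1 := ⟨hp0.le.trans hx.1, hx.2⟩
    have hy01 : y ∈ Set.Icc (0:ℝ) 1 := ⟨hp0.le.trans hy.1, hy.2⟩
    have hsplit : F x + (∫ b in x..y, g b) = F y :=
      intervalIntegral.integral_add_adjacent_intervals (hgint pbar hpmem x hx01)
        (hgint x hx01 y hy01)
    have hpos' : 0 < ∫ b in x..y, g b := by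
      apply intervalIntegral.intervalIntegral_pos_of_pos_on (hgint x hx01 y hy01) _ hxy
      intro b hb
      exact mul_pos (sub_pos.2 (lt_of_le_of_lt hx.1 hb.1))
        (hpos b ⟨hp0.trans_le (hx.1.trans hb.1.le), hb.2.trans_le hy.2⟩)
    linarith
  -- existence via IVT
  have hFp : F pbar = 0 := intervalIntegral.integral_same
  have hmem : T ∈ Set.Icc (F pbar) (F 1) := by rw [hFp]; exact ⟨hTnn, hTle⟩
  obtain ⟨r, hrmem, hrval⟩ := intermediate_value_Icc hp1.le hFcont hmem
  refine ⟨r, ⟨hrmem, hrval⟩, ?_⟩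
  rintro r' ⟨hr'mem, hr'val⟩
  exact hFmono.injOn hr'mem hrmem (hr'val.trans hrval.symm)
end

section
/- Let φ : [0,1] → ℝ be nonnegative, let 0 ≤ l < p̄ < r ≤ 1 satisfy the balance equation ∫_{p̄}^{r} (b − p̄)·φ(b) db = ∫_{l}^{p̄} (p̄ − b)·φ(b) db, and suppose 0 < B_l ≤ φ(b) ≤ B_h for all b ∈ [l, r]. Then √(B_l/B_h)·(p̄ − l) ≤ r − p̄ ≤ √(B_h/B_l)·(p̄ − l). -/
open MeasureTheory

lemma aux_int_right (a c K : ℝ) : (∫ b in a..c, (b - a) * K) = (c - a)^2 / 2 * K := by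
  rw [intervalIntegral.integral_mul_const]
  have : (∫ b in a..c, (b - a)) = (c - a)^2 / 2 := by
    rw [intervalIntegral.integral_sub (intervalIntegral.intervalIntegrable_id : IntervalIntegrable _ volume a c) (intervalIntegrable_const : IntervalIntegrable (fun _ => a) volume a c)]
    simp [integral_id]
    ring
  rw [this]

lemma aux_int_left (a c K : ℝ) : (∫ b in a..c, (c - b) * K) = (c - a)^2 / 2 * K := by
  rw [intervalIntegral.integral_mul_const]
  have : (∫ b in a..c, (c - b)) = (c - a)^2 / 2 := by
    rw [intervalIntegral.integral_sub (intervalIntegrable_const : IntervalIntegrable (fun _ => c) volume a c) (intervalIntegral.intervalIntegrable_id : IntervalIntegrable _ volume a c)]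
    simp [integral_id]
    ring
  rw [this]

/-- If `φ` is a nonnegative (integrable) density on `[0,1]`, the
balance equation `∫_{p̄}^r (b - p̄) φ = ∫_l^{p̄} (p̄ - b) φ` holds with
`0 ≤ l < p̄ < r ≤ 1`, and `0 < B_l ≤ φ ≤ B_h` on `[l, r]`, then
`√(B_l/B_h) (p̄ - l) ≤ r - p̄ ≤ √(B_h/B_l) (p̄ - l)`. -/
theorem stmt_3 (pbar l r : ℝ) (hpbar : pbar ∈ Set.Ioo (0:ℝ) 1)
    (φ : ℝ → ℝ) (hφnn : ∀ b ∈ Set.Icc (0:ℝ) 1, 0 ≤ φ b)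
    (hφint : IntervalIntegrable φ MeasureTheory.volume 0 1)
    (hl0 : 0 ≤ l) (hlp : l < pbar) (hpr : pbar < r) (hr1 : r ≤ 1)
    (Bl Bh : ℝ) (hBl : 0 < Bl)
    (hbound : ∀ b ∈ Set.Icc l r, Bl ≤ φ b ∧ φ b ≤ Bh)
    (hbal : (∫ b in pbar..r, (b - pbar) * φ b) = ∫ b in l..pbar, (pbar - b) * φ b) :
    Real.sqrt (Bl / Bh) * (pbar - l) ≤ r - pbar ∧
      r - pbar ≤ Real.sqrt (Bh / Bl) * (pbar - l) := by
  have hlr : l ≤ r := le_of_lt (lt_trans hlp hpr)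
  have hBh : 0 < Bh := lt_of_lt_of_le hBl
    (le_trans (hbound pbar ⟨le_of_lt hlp, le_of_lt hpr⟩).1
      (hbound pbar ⟨le_of_lt hlp, le_of_lt hpr⟩).2)
  -- integrability
  have hsub : ∀ c d : ℝ, l ≤ c → c ≤ d → d ≤ r →
      IntervalIntegrable φ volume c d := by
    intro c d hc hcd hd
    apply hφint.mono_set
    rw [Set.uIcc_of_le hcd, Set.uIcc_of_le (by linarith [hpbar.1, hpbar.2] : (0:ℝ) ≤ 1)]
    exact Set.Icc_subset_Icc (by linarith) (by linarith)
  have hIr : IntervalIntegrable (fun b => (b - pbar) * φ b) volume pbar r :=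
    (hsub pbar r (le_of_lt hlp) (le_of_lt hpr) le_rfl).continuousOn_mul
      (by fun_prop)
  have hIl : IntervalIntegrable (fun b => (pbar - b) * φ b) volume l pbar :=
    (hsub l pbar le_rfl (le_of_lt hlp) (le_of_lt hpr)).continuousOn_mul
      (by fun_prop)
  set X := r - pbar with hX
  set Y := pbar - l with hY
  have hX0 : 0 < X := by simp [hX]; linarith
  have hY0 : 0 < Y := by simp [hY]; linarith
  -- bounds on right integral
  have hr_lo : Bl * X^2 / 2 ≤ ∫ b in pbar..r, (b - pbar) * φ b := by
    have := intervalIntegral.integral_mono_on (le_of_lt hpr)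
      ((by fun_prop : Continuous fun b : ℝ => (b - pbar) * Bl).intervalIntegrable pbar r) hIr
      (fun b hb => by
        have hb' : b ∈ Set.Icc l r := ⟨le_trans (le_of_lt hlp) hb.1, hb.2⟩
        exact mul_le_mul_of_nonneg_left (hbound b hb').1 (by linarith [hb.1]))
    calc Bl * X^2 / 2 = (r - pbar)^2/2 * Bl := by rw [hX]; ring
      _ = ∫ b in pbar..r, (b - pbar) * Bl := (aux_int_right pbar r Bl).symm
      _ ≤ _ := this
  have hr_hi : (∫ b in pbar..r, (b - pbar) * φ b) ≤ Bh * X^2 / 2 := by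
    have := intervalIntegral.integral_mono_on (le_of_lt hpr) hIr
      ((by fun_prop : Continuous fun b : ℝ => (b - pbar) * Bh).intervalIntegrable pbar r)
      (fun b hb => by
        have hb' : b ∈ Set.Icc l r := ⟨le_trans (le_of_lt hlp) hb.1, hb.2⟩
        exact mul_le_mul_of_nonneg_left (hbound b hb').2 (by linarith [hb.1]))
    calc (∫ b in pbar..r, (b - pbar) * φ b) ≤ ∫ b in pbar..r, (b - pbar) * Bh := this
      _ = (r - pbar)^2/2 * Bh := aux_int_right pbar r Bh
      _ = Bh * X^2 / 2 := by rw [hX]; ring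
  -- bounds on left integral
  have hl_lo : Bl * Y^2 / 2 ≤ ∫ b in l..pbar, (pbar - b) * φ b := by
    have := intervalIntegral.integral_mono_on (le_of_lt hlp)
      ((by fun_prop : Continuous fun b : ℝ => (pbar - b) * Bl).intervalIntegrable l pbar) hIl
      (fun b hb => by
        have hb' : b ∈ Set.Icc l r := ⟨hb.1, le_trans hb.2 (le_of_lt hpr)⟩
        exact mul_le_mul_of_nonneg_left (hbound b hb').1 (by linarith [hb.2]))
    calc Bl * Y^2 / 2 = (pbar - l)^2/2 * Bl := by rw [hY]; ring
      _ = ∫ b in l..pbar, (pbar - b) * Bl := (aux_int_left l pbar Bl).symm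
      _ ≤ _ := this
  have hl_hi : (∫ b in l..pbar, (pbar - b) * φ b) ≤ Bh * Y^2 / 2 := by
    have := intervalIntegral.integral_mono_on (le_of_lt hlp) hIl
      ((by fun_prop : Continuous fun b : ℝ => (pbar - b) * Bh).intervalIntegrable l pbar)
      (fun b hb => by
        have hb' : b ∈ Set.Icc l r := ⟨hb.1, le_trans hb.2 (le_of_lt hpr)⟩
        exact mul_le_mul_of_nonneg_left (hbound b hb').2 (by linarith [hb.2]))
    calc (∫ b in l..pbar, (pbar - b) * φ b) ≤ ∫ b in l..pbar, (pbar - b) * Bh := this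
      _ = (pbar - l)^2/2 * Bh := aux_int_left l pbar Bh
      _ = Bh * Y^2 / 2 := by rw [hY]; ring
  clear_value X Y
  have key1 : Bl * X^2 ≤ Bh * Y^2 := by
    have := le_trans hr_lo (hbal ▸ hl_hi)
    linarith
  have key2 : Bl * Y^2 ≤ Bh * X^2 := by
    have := le_trans hl_lo (hbal ▸ hr_hi)
    linarith
  constructor
  · have h1 : Bl / Bh * Y^2 ≤ X^2 := by
      rw [div_mul_eq_mul_div, div_le_iff₀ hBh]
      nlinarith
    calc Real.sqrt (Bl / Bh) * Y = Real.sqrt (Bl / Bh * Y^2) := by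
          rw [Real.sqrt_mul (by positivity), Real.sqrt_sq hY0.le]
      _ ≤ Real.sqrt (X^2) := Real.sqrt_le_sqrt h1
      _ = X := Real.sqrt_sq hX0.le
  · have h1 : X^2 ≤ Bh / Bl * Y^2 := by
      rw [div_mul_eq_mul_div, le_div_iff₀ hBl]
      nlinarith
    calc X = Real.sqrt (X^2) := (Real.sqrt_sq hX0.le).symm
      _ ≤ Real.sqrt (Bh / Bl * Y^2) := Real.sqrt_le_sqrt h1
      _ = Real.sqrt (Bh / Bl) * Y := by
          rw [Real.sqrt_mul (by positivity), Real.sqrt_sq hY0.le]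
end

section
/- Let φ : [0,1] → ℝ be continuous, strictly positive on (0,1), and suppose ∫_{p̄}^{1} (b − p̄)·φ(b) db ≥ ∫_{0}^{p̄} (p̄ − b)·φ(b) db. For l ∈ [0, p̄] let r(l) ∈ [p̄, 1] be the unique solution of the balance equation ∫_{p̄}^{r(l)} (b − p̄)·φ(b) db = ∫_{l}^{p̄} (p̄ − b)·φ(b) db. Then l ↦ r(l) is continuous on [0, p̄] and strictly decreasing on (0, p̄]. -/
open Set MeasureTheory intervalIntegral

/-- Under the hypotheses of Statement 2, the solution map
`l ↦ r(l)` of the balance equation is continuous on `[0, p̄]` and strictly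
decreasing on `(0, p̄]`. -/
theorem stmt_4 (pbar : ℝ) (hpbar : pbar ∈ Set.Ioo (0:ℝ) 1)
    (φ : ℝ → ℝ) (hcont : ContinuousOn φ (Set.Icc 0 1))
    (hpos : ∀ b ∈ Set.Ioo (0:ℝ) 1, 0 < φ b)
    (hineq : (∫ b in (0:ℝ)..pbar, (pbar - b) * φ b) ≤ ∫ b in pbar..(1:ℝ), (b - pbar) * φ b)
    (r : ℝ → ℝ)
    (hr : ∀ l ∈ Set.Icc (0:ℝ) pbar, r l ∈ Set.Icc pbar 1 ∧
        (∫ b in pbar..(r l), (b - pbar) * φ b) = ∫ b in l..pbar, (pbar - b) * φ b) :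
    ContinuousOn r (Set.Icc 0 pbar) ∧ StrictAntiOn r (Set.Ioc 0 pbar) := by
  obtain ⟨hp0, hp1⟩ := hpbar
  set f₁ : ℝ → ℝ := fun b => (b - pbar) * φ b with hf₁def
  set f₂ : ℝ → ℝ := fun b => (pbar - b) * φ b with hf₂def
  set F : ℝ → ℝ := fun x => ∫ b in pbar..x, f₁ b with hFdef
  set G : ℝ → ℝ := fun l => ∫ b in l..pbar, f₂ b with hGdef
  have hc₁ : ContinuousOn f₁ (Icc 0 1) :=
    (continuousOn_id.sub continuousOn_const).mul hcont
  have hc₂ : ContinuousOn f₂ (Icc 0 1) :=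
    (continuousOn_const.sub continuousOn_id).mul hcont
  have hi₁ : ∀ a b : ℝ, a ∈ Icc (0:ℝ) 1 → b ∈ Icc (0:ℝ) 1 →
      IntervalIntegrable f₁ volume a b := fun a b ha hb =>
    (hc₁.mono (uIcc_subset_Icc ha hb)).intervalIntegrable
  have hi₂ : ∀ a b : ℝ, a ∈ Icc (0:ℝ) 1 → b ∈ Icc (0:ℝ) 1 →
      IntervalIntegrable f₂ volume a b := fun a b ha hb =>
    (hc₂.mono (uIcc_subset_Icc ha hb)).intervalIntegrable
  -- F strictly increasing on [pbar, 1]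
  have hFmono : StrictMonoOn F (Icc pbar 1) := by
    intro x hx y hy hxy
    have hxm : x ∈ Icc (0:ℝ) 1 := ⟨hp0.le.trans hx.1, hx.2⟩
    have hym : y ∈ Icc (0:ℝ) 1 := ⟨hp0.le.trans hy.1, hy.2⟩
    have hpm : pbar ∈ Icc (0:ℝ) 1 := ⟨hp0.le, hp1.le⟩
    have hadd := integral_add_adjacent_intervals (hi₁ pbar x hpm hxm) (hi₁ x y hxm hym)
    have hpos' : 0 < ∫ b in x..y, f₁ b := by
      refine intervalIntegral_pos_of_pos_on (hi₁ x y hxm hym) ?_ hxy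
      intro b hb
      exact mul_pos (by simp only [sub_pos]; linarith [hx.1, hb.1])
        (hpos b ⟨lt_of_le_of_lt (hp0.le.trans hx.1) hb.1, lt_of_lt_of_le hb.2 hy.2⟩)
    have : F y = F x + ∫ b in x..y, f₁ b := by rw [hFdef]; simp only; rw [hadd]
    linarith
  -- G strictly decreasing on [0, pbar]
  have hGanti : StrictAntiOn G (Icc 0 pbar) := by
    intro x hx y hy hxy
    have hxm : x ∈ Icc (0:ℝ) 1 := ⟨hx.1, hx.2.trans hp1.le⟩
    have hym : y ∈ Icc (0:ℝ) 1 := ⟨hy.1, hy.2.trans hp1.le⟩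
    have hpm : pbar ∈ Icc (0:ℝ) 1 := ⟨hp0.le, hp1.le⟩
    have hadd := integral_add_adjacent_intervals (hi₂ x y hxm hym) (hi₂ y pbar hym hpm)
    have hpos' : 0 < ∫ b in x..y, f₂ b := by
      refine intervalIntegral_pos_of_pos_on (hi₂ x y hxm hym) ?_ hxy
      intro b hb
      exact mul_pos (by simp only [sub_pos]; linarith [hy.2, hb.2])
        (hpos b ⟨lt_of_le_of_lt hx.1 hb.1, lt_of_lt_of_le hb.2 (hy.2.trans hp1.le)⟩)
    have : G x = (∫ b in x..y, f₂ b) + G y := by rw [hGdef]; simp only; rw [hadd]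
    linarith
  have hFinj : InjOn F (Icc pbar 1) := hFmono.injOn
  have hpmem : pbar ∈ Icc (0:ℝ) pbar := ⟨hp0.le, le_refl _⟩
  have h0mem : (0:ℝ) ∈ Icc (0:ℝ) pbar := ⟨le_refl _, hp0.le⟩
  -- r pbar = pbar
  have hrp : r pbar = pbar := by
    have h := hr pbar hpmem
    have hGp : G pbar = 0 := by rw [hGdef]; simp
    have hFp : F pbar = 0 := by rw [hFdef]; simp
    exact hFinj h.1 (left_mem_Icc.2 hp1.le)
      ((show F (r pbar) = G pbar from h.2).trans (hGp.trans hFp.symm))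
  -- strict antitonicity of r on Icc 0 pbar
  have hranti : StrictAntiOn r (Icc 0 pbar) := by
    intro x hx y hy hxy
    have hGx : F (r x) = G x := (hr x hx).2
    have hGy : F (r y) = G y := (hr y hy).2
    have hGlt : G y < G x := hGanti hx hy hxy
    by_contra hcon
    push_neg at hcon
    have : F (r x) ≤ F (r y) := by
      rcases eq_or_lt_of_le hcon with h | h
      · rw [h]
      · exact le_of_lt (hFmono (hr x hx).1 (hr y hy).1 h)
    rw [hGx, hGy] at this; linarith
  -- surjectivity of r onto [pbar, r 0]
  have hsurj : ∀ y ∈ Icc pbar (r 0), ∃ l ∈ Icc (0:ℝ) pbar, r l = y := by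
    intro y hy
    have hr0 := hr 0 h0mem
    have hy1 : y ∈ Icc pbar 1 := ⟨hy.1, hy.2.trans hr0.1.2⟩
    have hFmono' := hFmono.monotoneOn
    have hFy_le : F y ≤ G 0 := by
      have h1 : F y ≤ F (r 0) := hFmono' hy1 hr0.1 hy.2
      have h2 : F (r 0) = G 0 := hr0.2
      linarith
    have hFy_ge : G pbar ≤ F y := by
      have hGp : G pbar = 0 := by rw [hGdef]; simp
      have hFp : F pbar = 0 := by rw [hFdef]; simp
      rw [hGp]
      have := hFmono' (left_mem_Icc.2 hp1.le) hy1 hy.1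
      rw [hFp] at this; exact this
    -- G continuous on [0, pbar]
    have hGcont : ContinuousOn G (Icc 0 pbar) := by
      have hint : IntegrableOn f₂ (uIcc 0 pbar) volume := by
        rw [uIcc_of_le hp0.le]
        exact (hc₂.mono (Icc_subset_Icc le_rfl hp1.le)).integrableOn_Icc
      have := continuousOn_primitive_interval_left (a := 0) (b := pbar) hint
      rwa [uIcc_of_le hp0.le] at this
    have hivt := intermediate_value_Icc' hp0.le hGcont
    obtain ⟨l, hl, hGl⟩ := hivt ⟨hFy_ge, hFy_le⟩
    refine ⟨l, hl, ?_⟩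
    exact hFinj (hr l hl).1 hy1 ((show F (r l) = G l from (hr l hl).2).trans hGl)
  -- continuity
  refine ⟨?_, hranti.mono Ioc_subset_Icc_self⟩
  intro a ha
  -- dual function is strictly monotone
  set g : ℝ → ℝᵒᵈ := fun x => OrderDual.toDual (r x) with hgdef
  have hgmono : StrictMonoOn g (Icc 0 pbar) := fun x hx y hy hxy => hranti hx hy hxy
  have hright : a < pbar → ContinuousWithinAt r (Ici a) a := by
    intro hap
    have h : ContinuousWithinAt g (Ici a) a := by
      refine hgmono.continuousWithinAt_right_of_exists_between
        (Icc_mem_nhdsGE_of_mem ⟨ha.1, hap⟩) ?_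
      intro b hb
      -- hb : g a < b in dual, i.e. ofDual b < r a
      have hb' : OrderDual.ofDual b < r a := hb
      have hpa : pbar < r a := by
        have := hranti ha hpmem hap
        rwa [hrp] at this
      set t : ℝ := max (OrderDual.ofDual b) pbar with htdef
      have htlt : t < r a := max_lt hb' hpa
      have htle : t ≤ r 0 := le_of_lt (lt_of_lt_of_le htlt
        (by rcases eq_or_lt_of_le ha.1 with h0 | h0
            · rw [← h0]
            · exact le_of_lt (hranti h0mem ha h0)))
      obtain ⟨c, hc, hrc⟩ := hsurj t ⟨le_max_right _ _, htle⟩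
      refine ⟨c, hc, ?_, ?_⟩
      · show r c < r a
        rw [hrc]; exact htlt
      · show OrderDual.ofDual b ≤ r c
        rw [hrc]; exact le_max_left _ _
    exact h
  have hleft : 0 < a → ContinuousWithinAt r (Iic a) a := by
    intro h0a
    have h : ContinuousWithinAt g (Iic a) a := by
      refine hgmono.continuousWithinAt_left_of_exists_between
        (Icc_mem_nhdsLE_of_mem ⟨h0a, ha.2⟩) ?_
      intro b hb
      -- hb : b < g a in dual, i.e. r a < ofDual b
      have hb' : r a < OrderDual.ofDual b := hb
      have hra0 : r a < r 0 := hranti h0mem ha h0a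
      set t : ℝ := min (OrderDual.ofDual b) (r 0) with htdef
      have htgt : r a < t := lt_min hb' hra0
      have htp : pbar ≤ t := le_of_lt (lt_of_le_of_lt (hr a ha).1.1 htgt)
      obtain ⟨c, hc, hrc⟩ := hsurj t ⟨htp, min_le_right _ _⟩
      refine ⟨c, hc, ?_, ?_⟩
      · show r c ≤ OrderDual.ofDual b
        rw [hrc]; exact min_le_left _ _
      · show r a < r c
        rw [hrc]; exact htgt
    exact h
  rcases eq_or_lt_of_le ha.1 with h0 | h0
  · subst h0
    exact (hright hp0).mono Icc_subset_Ici_self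
  · rcases eq_or_lt_of_le ha.2 with hp | hp
    · subst hp
      exact (hleft h0).mono Icc_subset_Iic_self
    · exact ((hleft h0).union (hright hp)).mono (by
        intro x _; exact (le_total x a).elim Or.inl Or.inr)
end

section
/- Let φ : [0,1] → ℝ be continuous and strictly positive on (0,1), and for l ∈ [0, p̄] let r(l) ∈ [p̄, 1] be the unique solution of the balance equation ∫_{p̄}^{r(l)} (b − p̄)·φ(b) db = ∫_{l}^{p̄} (p̄ − b)·φ(b) db. Then at every l ∈ (0, p̄) with r(l) ∈ (p̄, 1), the function r is differentiable with derivative r′(l) = −((p̄ − l)/(r(l) − p̄)) · (φ(l)/φ(r(l))). -/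
open Set Function intervalIntegral MeasureTheory

/-- The solution map `l ↦ r(l)` of the balance equation is
differentiable at every `l ∈ (0, p̄)` with `r(l) ∈ (p̄, 1)`, with derivative
`r'(l) = -((p̄ - l)/(r(l) - p̄)) * (φ l / φ (r l))`. -/
theorem stmt_5 (pbar : ℝ) (hpbar : pbar ∈ Set.Ioo (0:ℝ) 1)
    (φ : ℝ → ℝ) (hcont : ContinuousOn φ (Set.Icc 0 1))
    (hpos : ∀ b ∈ Set.Ioo (0:ℝ) 1, 0 < φ b)
    (r : ℝ → ℝ)
    (hr : ∀ l ∈ Set.Icc (0:ℝ) pbar, r l ∈ Set.Icc pbar 1 ∧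
        (∫ b in pbar..(r l), (b - pbar) * φ b) = ∫ b in l..pbar, (pbar - b) * φ b) :
    ∀ l ∈ Set.Ioo (0:ℝ) pbar, r l ∈ Set.Ioo pbar 1 →
      HasDerivAt r (-((pbar - l) / (r l - pbar)) * (φ l / φ (r l))) l := by
  obtain ⟨hp0, hp1⟩ := hpbar
  intro l0 hl0 hr0
  set r0 := r l0 with hr0def
  set g : ℝ → ℝ := fun b => (b - pbar) * φ b with hg
  set h : ℝ → ℝ := fun b => (pbar - b) * φ b with hh
  set G : ℝ → ℝ := fun x => ∫ b in pbar..x, g b with hG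
  set F : ℝ → ℝ := fun l => ∫ b in l..pbar, h b with hF
  have hgc : ContinuousOn g (Icc 0 1) :=
    ((continuous_id.sub continuous_const).continuousOn).mul hcont
  have hhc : ContinuousOn h (Icc 0 1) :=
    ((continuous_const.sub continuous_id).continuousOn).mul hcont
  have hIccsub : Icc pbar 1 ⊆ Icc 0 1 := Icc_subset_Icc hp0.le le_rfl
  have hgint : ∀ u ∈ Icc (0:ℝ) 1, ∀ v ∈ Icc (0:ℝ) 1, IntervalIntegrable g volume u v := by
    intro u hu v hv
    apply (hgc.mono _).intervalIntegrable
    rw [show Icc (0:ℝ) 1 = uIcc 0 1 by rw [uIcc_of_le zero_le_one]]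
    exact uIcc_subset_uIcc (by simpa [uIcc_of_le (zero_le_one' ℝ)] using hu)
      (by simpa [uIcc_of_le (zero_le_one' ℝ)] using hv)
  -- strict monotonicity of G on [pbar, 1]
  have hGmono : StrictMonoOn G (Icc pbar 1) := by
    intro x hx y hy hxy
    have hxy' : (∫ b in pbar..x, g b) + ∫ b in x..y, g b = ∫ b in pbar..y, g b :=
      integral_add_adjacent_intervals (hgint pbar ⟨hp0.le, hp1.le⟩ x (hIccsub hx))
        (hgint x (hIccsub hx) y (hIccsub hy))
    have hpos' : 0 < ∫ b in x..y, g b := by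
      apply intervalIntegral_pos_of_pos_on (hgint x (hIccsub hx) y (hIccsub hy)) _ hxy
      intro b hb
      have hb1 : pbar < b := lt_of_le_of_lt hx.1 hb.1
      have hb2 : b < 1 := lt_of_lt_of_le hb.2 hy.2
      exact mul_pos (by linarith) (hpos b ⟨hp0.trans hb1, hb2⟩)
    show G x < G y
    rw [hG]; dsimp only; rw [← hxy']; linarith
  have hGinj : InjOn G (Icc pbar 1) := hGmono.injOn
  have hGMonoOn : MonotoneOn G (Icc pbar 1) := hGmono.monotoneOn
  -- continuity of G on [pbar, 1]
  have hGcont : ContinuousOn G (Icc pbar 1) := by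
    have : ContinuousOn (fun x => ∫ b in pbar..x, g b) (uIcc pbar 1) := by
      apply continuousOn_primitive_interval
      rw [uIcc_of_le hp1.le]
      exact (hgc.mono hIccsub).integrableOn_Icc
    rwa [uIcc_of_le hp1.le] at this
  -- image contains [G pbar, G 1]
  have hIVT : Icc (G pbar) (G 1) ⊆ G '' Icc pbar 1 := intermediate_value_Icc hp1.le hGcont
  have hr0mem : r0 ∈ Icc pbar 1 := ⟨hr0.1.le, hr0.2.le⟩
  have hy0lt1 : G pbar < G r0 := hGmono (left_mem_Icc.2 hp1.le) hr0mem hr0.1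
  have hy0lt2 : G r0 < G 1 := hGmono hr0mem (right_mem_Icc.2 hp1.le) hr0.2
  set y0 := G r0 with hy0
  set ψ : ℝ → ℝ := invFunOn G (Icc pbar 1) with hψ
  have hψG : ∀ x ∈ Icc pbar 1, ψ (G x) = x := fun x hx => hGinj.leftInvOn_invFunOn hx
  have hmemim : ∀ y ∈ Icc (G pbar) (G 1), ∃ a ∈ Icc pbar 1, G a = y := by
    intro y hy
    obtain ⟨a, ha, hay⟩ := hIVT hy
    exact ⟨a, ha, hay⟩
  have hGψ : ∀ y ∈ Icc (G pbar) (G 1), G (ψ y) = y := fun y hy =>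
    Function.invFunOn_eq (hmemim y hy)
  have hψmem : ∀ y ∈ Icc (G pbar) (G 1), ψ y ∈ Icc pbar 1 := fun y hy =>
    Function.invFunOn_mem (hmemim y hy)
  have hψy0 : ψ y0 = r0 := hψG r0 hr0mem
  -- continuity of ψ at y0
  have hψcont : ContinuousAt ψ y0 := by
    rw [Metric.continuousAt_iff]
    intro ε hε
    set ε' : ℝ := min ε (min ((r0 - pbar) / 2) ((1 - r0) / 2)) with hε'
    have hε'pos : 0 < ε' := by
      apply lt_min hε (lt_min (by linarith [hr0.1]) (by linarith [hr0.2]))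
    have hε'le : ε' ≤ ε := min_le_left _ _
    have h1 : pbar < r0 - ε' := by
      have : ε' ≤ (r0 - pbar) / 2 := (min_le_right ε _).trans (min_le_left _ _)
      linarith [hr0.1]
    have h2 : r0 + ε' < 1 := by
      have : ε' ≤ (1 - r0) / 2 := (min_le_right ε _).trans (min_le_right _ _)
      linarith [hr0.2]
    have hml : r0 - ε' ∈ Icc pbar 1 := ⟨h1.le, by linarith⟩
    have hmr : r0 + ε' ∈ Icc pbar 1 := ⟨by linarith [hr0.1], h2.le⟩
    have hGl : G (r0 - ε') < y0 := hGmono hml hr0mem (by linarith)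
    have hGr : y0 < G (r0 + ε') := hGmono hr0mem hmr (by linarith)
    refine ⟨min (y0 - G (r0 - ε')) (G (r0 + ε') - y0), lt_min (by linarith) (by linarith), ?_⟩
    intro y hy
    rw [Real.dist_eq] at hy
    have hy1 : G (r0 - ε') < y := by
      have := abs_lt.1 hy
      have := (min_le_left (y0 - G (r0 - ε')) (G (r0 + ε') - y0))
      linarith [abs_lt.1 hy |>.1, min_le_left (y0 - G (r0 - ε')) (G (r0 + ε') - y0)]
    have hy2 : y < G (r0 + ε') := by
      linarith [abs_lt.1 hy |>.2, min_le_right (y0 - G (r0 - ε')) (G (r0 + ε') - y0)]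
    have hyIcc : y ∈ Icc (G pbar) (G 1) := by
      constructor
      · exact le_trans (hGMonoOn (left_mem_Icc.2 hp1.le) hml h1.le) hy1.le
      · exact le_trans hy2.le (hGMonoOn hmr (right_mem_Icc.2 hp1.le) h2.le)
    have hψyIcc := hψmem y hyIcc
    have hGψy := hGψ y hyIcc
    have hlow : r0 - ε' < ψ y := by
      by_contra hc
      push_neg at hc
      have := hGMonoOn hψyIcc hml hc
      rw [hGψy] at this
      linarith
    have hhigh : ψ y < r0 + ε' := by
      by_contra hc
      push_neg at hc
      have := hGMonoOn hmr hψyIcc hc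
      rw [hGψy] at this
      linarith
    rw [Real.dist_eq, hψy0]
    rw [abs_lt]
    constructor <;> [linarith; linarith]
  -- derivative of G at r0
  have hr0Ioo : r0 ∈ Ioo (0:ℝ) 1 := ⟨hp0.trans hr0.1, hr0.2⟩
  have hl0Ioo : l0 ∈ Ioo (0:ℝ) 1 := ⟨hl0.1, hl0.2.trans hp1⟩
  have hGderiv : HasDerivAt G ((r0 - pbar) * φ r0) r0 := by
    have := integral_hasDerivAt_right
      (hgint pbar ⟨hp0.le, hp1.le⟩ r0 (hIccsub hr0mem))
      (ContinuousOn.stronglyMeasurableAtFilter isOpen_Ioo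
        (hgc.mono Ioo_subset_Icc_self) r0 hr0Ioo)
      ((hgc.continuousAt (Icc_mem_nhds hr0Ioo.1 hr0Ioo.2)))
    exact this
  have hG'ne : (r0 - pbar) * φ r0 ≠ 0 :=
    ne_of_gt (mul_pos (by linarith [hr0.1]) (hpos r0 hr0Ioo))
  -- derivative of ψ at y0
  have hev : ∀ᶠ y in nhds y0, G (ψ y) = y := by
    filter_upwards [Ioo_mem_nhds hy0lt1 hy0lt2] with y hy
    exact hGψ y (Ioo_subset_Icc_self hy)
  have hψderiv : HasDerivAt ψ ((r0 - pbar) * φ r0)⁻¹ y0 := by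
    apply HasDerivAt.of_local_left_inverse hψcont _ hG'ne hev
    rw [hψy0]; exact hGderiv
  -- derivative of F at l0
  have hFderiv : HasDerivAt F (-((pbar - l0) * φ l0)) l0 := by
    have hhint : IntervalIntegrable h volume l0 pbar := by
      apply (hhc.mono _).intervalIntegrable
      rw [uIcc_of_le hl0.2.le]
      exact Icc_subset_Icc hl0.1.le hp1.le
    exact integral_hasDerivAt_left hhint
      (ContinuousOn.stronglyMeasurableAtFilter isOpen_Ioo
        (hhc.mono Ioo_subset_Icc_self) l0 hl0Ioo)
      (hhc.continuousAt (Icc_mem_nhds hl0Ioo.1 hl0Ioo.2))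
  -- compose
  have hFl0 : F l0 = y0 := ((hr l0 ⟨hl0.1.le, hl0.2.le⟩).2).symm
  have hcomp : HasDerivAt (ψ ∘ F) (((r0 - pbar) * φ r0)⁻¹ * (-((pbar - l0) * φ l0))) l0 := by
    apply HasDerivAt.comp
    · rw [hFl0]; exact hψderiv
    · exact hFderiv
  have hreq : r =ᶠ[nhds l0] ψ ∘ F := by
    filter_upwards [Ioo_mem_nhds hl0.1 hl0.2] with l hl
    obtain ⟨hrl, heq⟩ := hr l ⟨hl.1.le, hl.2.le⟩
    have : F l = G (r l) := heq.symm
    simp only [comp_apply, this]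
    exact (hψG (r l) hrl).symm
  have := hcomp.congr_of_eventuallyEq hreq
  convert this using 1
  have hφr0 : φ r0 ≠ 0 := ne_of_gt (hpos r0 hr0Ioo)
  have hrp : r0 - pbar ≠ 0 := by have := hr0.1; intro hc; linarith [sub_eq_zero.mp hc]
  case e'_4 => rfl
  case e'_5 => rfl
  field_simp
end

section
/- Let 0 ≤ L < c < H and β ∈ (0,1), and set Δ := (1−β)(c−L)/(H − β·c − (1−β)·L) and p̄ := (c−L)/(H−L). Then 0 < Δ < p̄, and for every b ∈ [0, Δ] and all reals V_H, V_L with V_H ≤ (H−c)/(1−β) and V_L ≤ 0, the expression b·H + (1−b)·L − c + β·(b·V_H + (1−b)·V_L) is less than or equal to 0. -/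
/-- With `0 ≤ L < c < H`, `β ∈ (0,1)`,
`Δ = (1-β)(c-L)/(H - βc - (1-β)L)` and `p̄ = (c-L)/(H-L)`, we have
`0 < Δ < p̄`, and for every belief `b ∈ [0, Δ]` and continuation values
`V_H ≤ (H-c)/(1-β)`, `V_L ≤ 0`, the continuation value
`bH + (1-b)L - c + β(b V_H + (1-b) V_L)` is nonpositive. -/
theorem stmt_6 (L c H β : ℝ) (hL : 0 ≤ L) (hLc : L < c) (hcH : c < H)
    (hβ : β ∈ Set.Ioo (0:ℝ) 1)
    (Δ pbar : ℝ)
    (hΔ : Δ = (1 - β) * (c - L) / (H - β * c - (1 - β) * L))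
    (hpbar : pbar = (c - L) / (H - L)) :
    0 < Δ ∧ Δ < pbar ∧
      ∀ b ∈ Set.Icc (0:ℝ) Δ, ∀ VH VL : ℝ,
        VH ≤ (H - c) / (1 - β) → VL ≤ 0 →
        b * H + (1 - b) * L - c + β * (b * VH + (1 - b) * VL) ≤ 0 := by
  obtain ⟨hβ0, hβ1⟩ := hβ
  have hD : 0 < H - β * c - (1 - β) * L := by nlinarith
  have h1β : 0 < 1 - β := by linarith
  have hΔpos : 0 < Δ := by
    rw [hΔ]; exact div_pos (by nlinarith) hD
  refine ⟨hΔpos, ?_, ?_⟩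
  · rw [hΔ, hpbar, div_lt_div_iff₀ hD (by linarith)]
    nlinarith [mul_pos hβ0 (mul_pos (sub_pos.2 hLc) (sub_pos.2 hcH))]
  · rintro b ⟨hb0, hbΔ⟩ VH VL hVH hVL
    have hbΔ' : b * (H - β * c - (1 - β) * L) ≤ (1 - β) * (c - L) := by
      rw [hΔ, le_div_iff₀ hD] at hbΔ
      linarith
    have hVH' : (1 - β) * VH ≤ H - c := by
      rw [le_div_iff₀ h1β] at hVH
      linarith
    have hb : 0 ≤ β * b := by positivity
    have h2 : β * (1 - b) * VL ≤ 0 := by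
      by_cases hb1 : b ≤ 1
      · have : 0 ≤ β * (1 - b) := by nlinarith
        nlinarith
      ·
        exfalso
        have hpb1 : (c - L) / (H - L) < 1 := by
          rw [div_lt_one (by linarith)]; linarith
        have : Δ < 1 := by
          rw [hΔ]
          rw [div_lt_one hD]
          nlinarith
        linarith
    -- b*H + (1-b)*L - c + β*(b*VH + (1-b)*VL)
    have h3 : β * b * VH ≤ β * b * ((H - c)/(1-β)) := by
      exact mul_le_mul_of_nonneg_left hVH hb
    have h4 : β * b * ((H-c)/(1-β)) = β * b * (H - c) / (1 - β) := by ring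
    -- key: b*H+(1-b)*L-c + β*b*(H-c)/(1-β) ≤ 0
    have key : b * H + (1 - b) * L - c + β * b * (H - c) / (1 - β) ≤ 0 := by
      have heq : b * H + (1 - b) * L - c + β * b * (H - c) / (1 - β)
          = ((b * H + (1 - b) * L - c) * (1 - β) + β * b * (H - c)) / (1 - β) := by
        field_simp
      rw [heq]
      apply div_nonpos_of_nonpos_of_nonneg _ h1β.le
      nlinarith [hbΔ']
    nlinarith [h2, h3]
end

section
/- Under the MLRP assumption, fix b₁ ∈ (0,1) and define, for p₂ ∈ (0,1), V̂(p₂) := (b₁·H + (1−b₁)·L − c) + b₁·(1 − F_H(v̄(p₂)))·(H − c) + (1−b₁)·(1 − F_L(v̄(p₂)))·(L − c). Then V̂ is strictly increasing on (0, b₁] and strictly decreasing on [b₁, 1); in particular V̂ attains its unique maximum over (0,1) at p₂ = b₁. -/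
open MeasureTheory

private lemma cdf_diff_aux (V : Set ℝ) (hV : MeasurableSet V) (f : ℝ → ℝ)
    (hint : IntegrableOn f V) (x y : ℝ) (hxy : x ≤ y)
    (hsub : Set.Ioc x y ⊆ V) :
    (∫ v in V ∩ Set.Iic y, f v) - (∫ v in V ∩ Set.Iic x, f v)
      = ∫ v in Set.Ioc x y, f v := by
  have hset : V ∩ Set.Iic y = (V ∩ Set.Iic x) ∪ Set.Ioc x y := by
    ext v
    simp only [Set.mem_inter_iff, Set.mem_Iic, Set.mem_union, Set.mem_Ioc]
    constructor
    · rintro ⟨hv, hvy⟩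
      by_cases h : v ≤ x
      · exact Or.inl ⟨hv, h⟩
      · exact Or.inr ⟨lt_of_not_ge h, hvy⟩
    · rintro (⟨hv, hvx⟩ | ⟨hvx, hvy⟩)
      · exact ⟨hv, hvx.trans hxy⟩
      · exact ⟨hsub ⟨hvx, hvy⟩, hvy⟩
  have hdisj : Disjoint (V ∩ Set.Iic x) (Set.Ioc x y) := by
    rw [Set.disjoint_left]
    intro v hv1 hv2
    exact absurd hv1.2 (not_le.mpr hv2.1)
  rw [hset, MeasureTheory.setIntegral_union hdisj measurableSet_Ioc
    (hint.mono_set Set.inter_subset_left) (hint.mono_set hsub)]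
  ring

/-- Under the MLRP assumption, fixing the reviewer's posterior
`b₁ ∈ (0,1)`, her continuation value
`V̂(p₂) = (b₁ H + (1-b₁) L - c) + b₁ (1 - F_H(v̄(p₂)))(H-c) + (1-b₁)(1 - F_L(v̄(p₂)))(L-c)`
from inducing public belief `p₂` (conditional on a purchase) is strictly
increasing on `(0, b₁]`, strictly decreasing on `[b₁, 1)`, and attains its
unique maximum over `(0,1)` at `p₂ = b₁`. -/
theorem stmt_10
    (V : Set ℝ) (hVopen : IsOpen V) (hVconn : V.OrdConnected) (hVne : V.Nonempty)
    (fH fL : ℝ → ℝ)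
    (hfHpos : ∀ v ∈ V, 0 < fH v) (hfLpos : ∀ v ∈ V, 0 < fL v)
    (hfHcont : ContinuousOn fH V) (hfLcont : ContinuousOn fL V)
    (hfHint : IntegrableOn fH V) (hfLint : IntegrableOn fL V)
    (hfHone : (∫ v in V, fH v) = 1) (hfLone : (∫ v in V, fL v) = 1)
    (hmono : StrictMonoOn (fun v => Real.log (fH v / fL v)) V)
    (hbelow : ∀ M : ℝ, ∃ v ∈ V, Real.log (fH v / fL v) < M)
    (habove : ∀ M : ℝ, ∃ v ∈ V, M < Real.log (fH v / fL v))
    (L c H : ℝ) (hL : 0 ≤ L) (hLc : L < c) (hcH : c < H)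
    (pbar : ℝ) (hpbar : pbar = (c - L) / (H - L))
    (vbar : ℝ → ℝ)
    (hvbar : ∀ p ∈ Set.Ioo (0:ℝ) 1, vbar p ∈ V ∧
        p * fH (vbar p) / (p * fH (vbar p) + (1 - p) * fL (vbar p)) = pbar)
    (FH FL : ℝ → ℝ)
    (hFH : ∀ x : ℝ, FH x = ∫ v in V ∩ Set.Iic x, fH v)
    (hFL : ∀ x : ℝ, FL x = ∫ v in V ∩ Set.Iic x, fL v)
    (b1 : ℝ) (hb1 : b1 ∈ Set.Ioo (0:ℝ) 1)
    (Vhat : ℝ → ℝ)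
    (hVhat : ∀ p2 : ℝ, Vhat p2 = (b1 * H + (1 - b1) * L - c)
        + b1 * (1 - FH (vbar p2)) * (H - c)
        + (1 - b1) * (1 - FL (vbar p2)) * (L - c)) :
    StrictMonoOn Vhat (Set.Ioc 0 b1) ∧ StrictAntiOn Vhat (Set.Ico b1 1) ∧
      ∀ p2 ∈ Set.Ioo (0:ℝ) 1, p2 ≠ b1 → Vhat p2 < Vhat b1 := by
  obtain ⟨hb1pos, hb1lt⟩ := hb1
  have hHL : L < H := hLc.trans hcH
  have hHLne : (H - L) ≠ 0 := by linarith
  have hpbar0 : 0 < pbar := by rw [hpbar]; apply div_pos <;> linarith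
  have hpbar1 : pbar < 1 := by
    rw [hpbar, div_lt_one (by linarith)]; linarith
  -- the defining equation of vbar, cleared of the denominator
  have hb : ∀ p ∈ Set.Ioo (0:ℝ) 1,
      (1 - pbar) * (p * fH (vbar p)) = pbar * ((1 - p) * fL (vbar p)) := by
    intro p hp
    obtain ⟨hvV, heq⟩ := hvbar p hp
    have hfH' := hfHpos _ hvV
    have hfL' := hfLpos _ hvV
    have hp1 := hp.1
    have hp2 := hp.2
    have hden : 0 < p * fH (vbar p) + (1 - p) * fL (vbar p) := by nlinarith
    rw [div_eq_iff hden.ne'] at heq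
    nlinarith [heq]
  -- the likelihood ratio is strictly increasing on V
  have hR : ∀ u ∈ V, ∀ w ∈ V, u < w → fH u / fL u < fH w / fL w := by
    intro u hu w hw huw
    have h := hmono hu hw huw
    have h1 : 0 < fH u / fL u := div_pos (hfHpos u hu) (hfLpos u hu)
    have h2 : 0 < fH w / fL w := div_pos (hfHpos w hw) (hfLpos w hw)
    exact (Real.log_lt_log_iff h1 h2).mp h
  -- vbar is strictly decreasing on (0,1)
  have hRval : ∀ p ∈ Set.Ioo (0:ℝ) 1,
      fH (vbar p) / fL (vbar p) = pbar * (1 - p) / ((1 - pbar) * p) := by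
    intro p hp
    have h := hb p hp
    have hfL' := (hfLpos _ (hvbar p hp).1).ne'
    have hp1 : (0:ℝ) < p := hp.1
    have h1mp : (1 - pbar) ≠ 0 := by linarith
    field_simp
    linear_combination h
  have hvanti : ∀ p ∈ Set.Ioo (0:ℝ) 1, ∀ q ∈ Set.Ioo (0:ℝ) 1, p < q →
      vbar q < vbar p := by
    intro p hp q hq hpq
    have hvp := (hvbar p hp).1
    have hvq := (hvbar q hq).1
    have hlt : fH (vbar q) / fL (vbar q) < fH (vbar p) / fL (vbar p) := by
      rw [hRval p hp, hRval q hq]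
      rw [div_lt_div_iff₀ (by nlinarith [hq.1] : (0:ℝ) < (1 - pbar) * q)
        (by nlinarith [hp.1] : (0:ℝ) < (1 - pbar) * p)]
      nlinarith [hp.1, hq.2, mul_pos hpbar0 (mul_pos
        (mul_pos (sub_pos.mpr hpbar1) (sub_pos.mpr hpbar1)) (sub_pos.mpr hpq))]
    by_contra hcon
    push_neg at hcon
    rcases eq_or_lt_of_le hcon with heq | hlt2
    · rw [heq] at hlt; exact lt_irrefl _ hlt
    · exact absurd (hR _ hvp _ hvq hlt2) (not_lt.mpr hlt.le)
  have hb1' : b1 ∈ Set.Ioo (0:ℝ) 1 := ⟨hb1pos, hb1lt⟩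
  have hwV : vbar b1 ∈ V := (hvbar b1 hb1').1
  -- the threshold identity at vbar b1
  have hc1 : pbar * (H - L) = c - L := by
    rw [hpbar, div_mul_cancel₀ _ hHLne]
  have hwkey : b1 * (H - c) * fH (vbar b1) = (1 - b1) * (c - L) * fL (vbar b1) := by
    have h := hb b1 hb1'
    linear_combination (H - L) * h + (b1 * fH (vbar b1) + (1 - b1) * fL (vbar b1)) * hc1
  have hK1 : (0:ℝ) < b1 * (H - c) := by nlinarith
  have hK2 : (0:ℝ) < (1 - b1) * (c - L) := by nlinarith
  -- pointwise comparisons away from the threshold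
  have hkeylt : ∀ v ∈ V, v < vbar b1 →
      b1 * (H - c) * fH v < (1 - b1) * (c - L) * fL v := by
    intro v hv hlt
    have hcross : fH v * fL (vbar b1) < fH (vbar b1) * fL v := by
      have h := hR v hv _ hwV hlt
      rwa [div_lt_div_iff₀ (hfLpos v hv) (hfLpos _ hwV)] at h
    nlinarith [hfLpos _ hwV, hfLpos v hv, mul_lt_mul_of_pos_left hcross hK1]
  have hkeygt : ∀ v ∈ V, vbar b1 < v →
      (1 - b1) * (c - L) * fL v < b1 * (H - c) * fH v := by
    intro v hv hlt
    have hcross : fH (vbar b1) * fL v < fH v * fL (vbar b1) := by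
      have h := hR _ hwV v hv hlt
      rwa [div_lt_div_iff₀ (hfLpos _ hwV) (hfLpos v hv)] at h
    nlinarith [hfLpos _ hwV, hfLpos v hv, mul_lt_mul_of_pos_left hcross hK1]
  -- integral difference formula
  have hGdiff : ∀ x y, x ∈ V → y ∈ V → x ≤ y →
      (b1 * (1 - FH x) * (H - c) + (1 - b1) * (1 - FL x) * (L - c))
      - (b1 * (1 - FH y) * (H - c) + (1 - b1) * (1 - FL y) * (L - c))
      = ∫ v in Set.Ioc x y, (b1 * (H - c) * fH v - (1 - b1) * (c - L) * fL v) := by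
    intro x y hx hy hxy
    have hsub : Set.Ioc x y ⊆ V := fun v hv => hVconn.out hx hy ⟨hv.1.le, hv.2⟩
    have hH := cdf_diff_aux V hVopen.measurableSet fH hfHint x y hxy hsub
    have hLd := cdf_diff_aux V hVopen.measurableSet fL hfLint x y hxy hsub
    have hiH : IntegrableOn fH (Set.Ioc x y) := hfHint.mono_set hsub
    have hiL : IntegrableOn fL (Set.Ioc x y) := hfLint.mono_set hsub
    have hsplit : (∫ v in Set.Ioc x y,
        (b1 * (H - c) * fH v - (1 - b1) * (c - L) * fL v))
        = b1 * (H - c) * (∫ v in Set.Ioc x y, fH v)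
          - (1 - b1) * (c - L) * (∫ v in Set.Ioc x y, fL v) := by
      rw [MeasureTheory.integral_sub (hiH.const_mul _) (hiL.const_mul _),
        MeasureTheory.integral_const_mul, MeasureTheory.integral_const_mul]
    rw [hsplit, hFH x, hFH y, hFL x, hFL y]
    linear_combination b1 * (H - c) * hH - (1 - b1) * (c - L) * hLd
  -- positivity of integrals of positive integrands
  have hintpos : ∀ (g : ℝ → ℝ) (x y : ℝ), IntegrableOn g (Set.Ioc x y) → x < y →
      (∀ v ∈ Set.Ioo x y, 0 < g v) → 0 < ∫ v in Set.Ioc x y, g v := by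
    intro g x y hint hxy hpos
    have h1 : IntervalIntegrable g volume x y := by
      rw [intervalIntegrable_iff_integrableOn_Ioc_of_le hxy.le]; exact hint
    have h2 := intervalIntegral.intervalIntegral_pos_of_pos_on h1 hpos hxy
    rwa [intervalIntegral.integral_of_le hxy.le] at h2
  have hmono1 : StrictMonoOn Vhat (Set.Ioc 0 b1) := by
    intro p hp q hq hpq
    have hp' : p ∈ Set.Ioo (0:ℝ) 1 := ⟨hp.1, lt_of_le_of_lt hp.2 hb1lt⟩
    have hq' : q ∈ Set.Ioo (0:ℝ) 1 := ⟨hq.1, lt_of_le_of_lt hq.2 hb1lt⟩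
    have hxV := (hvbar q hq').1
    have hyV := (hvbar p hp').1
    have hxy : vbar q < vbar p := hvanti p hp' q hq' hpq
    have hwx : vbar b1 ≤ vbar q := by
      rcases eq_or_lt_of_le hq.2 with h | h
      · exact le_of_eq (by rw [h])
      · exact (hvanti q hq' b1 hb1' h).le
    have hpos : ∀ v ∈ Set.Ioo (vbar q) (vbar p),
        0 < b1 * (H - c) * fH v - (1 - b1) * (c - L) * fL v := by
      intro v hv
      have hvV : v ∈ V := hVconn.out hxV hyV ⟨hv.1.le, hv.2.le⟩
      have := hkeygt v hvV (lt_of_le_of_lt hwx hv.1)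
      linarith
    have hsub : Set.Ioc (vbar q) (vbar p) ⊆ V :=
      fun v hv => hVconn.out hxV hyV ⟨hv.1.le, hv.2⟩
    have hint : IntegrableOn (fun v => b1 * (H - c) * fH v - (1 - b1) * (c - L) * fL v)
        (Set.Ioc (vbar q) (vbar p)) :=
      ((hfHint.mono_set hsub).const_mul _).sub ((hfLint.mono_set hsub).const_mul _)
    have h0 := hintpos _ _ _ hint hxy hpos
    have hG := hGdiff _ _ hxV hyV hxy.le
    rw [hVhat p, hVhat q]
    linarith [h0, hG]
  have hanti1 : StrictAntiOn Vhat (Set.Ico b1 1) := by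
    intro p hp q hq hpq
    have hp' : p ∈ Set.Ioo (0:ℝ) 1 := ⟨lt_of_lt_of_le hb1pos hp.1, hp.2⟩
    have hq' : q ∈ Set.Ioo (0:ℝ) 1 := ⟨lt_of_lt_of_le hb1pos hq.1, hq.2⟩
    have hxV := (hvbar q hq').1
    have hyV := (hvbar p hp').1
    have hxy : vbar q < vbar p := hvanti p hp' q hq' hpq
    have hyw : vbar p ≤ vbar b1 := by
      rcases eq_or_lt_of_le hp.1 with h | h
      · exact le_of_eq (by rw [h])
      · exact (hvanti b1 hb1' p hp' h).le
    have hpos : ∀ v ∈ Set.Ioo (vbar q) (vbar p),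
        0 < (1 - b1) * (c - L) * fL v - b1 * (H - c) * fH v := by
      intro v hv
      have hvV : v ∈ V := hVconn.out hxV hyV ⟨hv.1.le, hv.2.le⟩
      have := hkeylt v hvV (lt_of_lt_of_le hv.2 hyw)
      linarith
    have hsub : Set.Ioc (vbar q) (vbar p) ⊆ V :=
      fun v hv => hVconn.out hxV hyV ⟨hv.1.le, hv.2⟩
    have hint : IntegrableOn (fun v => (1 - b1) * (c - L) * fL v - b1 * (H - c) * fH v)
        (Set.Ioc (vbar q) (vbar p)) :=
      ((hfLint.mono_set hsub).const_mul _).sub ((hfHint.mono_set hsub).const_mul _)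
    have h0 := hintpos _ _ _ hint hxy hpos
    have hG := hGdiff _ _ hxV hyV hxy.le
    have hneg : (∫ v in Set.Ioc (vbar q) (vbar p),
        (b1 * (H - c) * fH v - (1 - b1) * (c - L) * fL v))
        = - ∫ v in Set.Ioc (vbar q) (vbar p),
            ((1 - b1) * (c - L) * fL v - b1 * (H - c) * fH v) := by
      rw [← MeasureTheory.integral_neg]
      congr 1
      ext v
      ring
    rw [hVhat p, hVhat q]
    rw [hneg] at hG
    linarith [h0, hG]
  refine ⟨hmono1, hanti1, ?_⟩
  intro p2 hp2 hne
  rcases lt_or_gt_of_ne hne with h | h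
  · exact hmono1 ⟨hp2.1, h.le⟩ ⟨hb1pos, le_rfl⟩ h
  · exact hanti1 ⟨le_rfl, hb1lt⟩ ⟨h.le, hp2.2⟩ h
end

section
/- Under the MLRP assumption, for every p₂ ∈ (0,1): p̄·(1 − F_H(v̄(p₂)))·(H − c) + (1 − p̄)·(1 − F_L(v̄(p₂)))·(L − c) = (1 − p̄)·(c − L)·(F_L(v̄(p₂)) − F_H(v̄(p₂))) > 0. That is, a reviewer whose posterior equals the myopic cutoff p̄ obtains a strictly positive continuation value from inducing any purchase, for any induced public belief p₂. -/
open MeasureTheory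

/-- Under the MLRP assumption, for every `p₂ ∈ (0,1)`,
`p̄ (1 - F_H(v̄(p₂)))(H-c) + (1-p̄)(1 - F_L(v̄(p₂)))(L-c)
  = (1-p̄)(c-L)(F_L(v̄(p₂)) - F_H(v̄(p₂))) > 0`:
a reviewer whose posterior equals the myopic cutoff `p̄` obtains a strictly
positive continuation value from inducing any purchase. -/
theorem stmt_11
    (V : Set ℝ) (hVopen : IsOpen V) (hVconn : V.OrdConnected) (hVne : V.Nonempty)
    (fH fL : ℝ → ℝ)
    (hfHpos : ∀ v ∈ V, 0 < fH v) (hfLpos : ∀ v ∈ V, 0 < fL v)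
    (hfHcont : ContinuousOn fH V) (hfLcont : ContinuousOn fL V)
    (hfHint : IntegrableOn fH V) (hfLint : IntegrableOn fL V)
    (hfHone : (∫ v in V, fH v) = 1) (hfLone : (∫ v in V, fL v) = 1)
    (hmono : StrictMonoOn (fun v => Real.log (fH v / fL v)) V)
    (hbelow : ∀ M : ℝ, ∃ v ∈ V, Real.log (fH v / fL v) < M)
    (habove : ∀ M : ℝ, ∃ v ∈ V, M < Real.log (fH v / fL v))
    (L c H : ℝ) (hL : 0 ≤ L) (hLc : L < c) (hcH : c < H)
    (pbar : ℝ) (hpbar : pbar = (c - L) / (H - L))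
    (vbar : ℝ → ℝ)
    (hvbar : ∀ p ∈ Set.Ioo (0:ℝ) 1, vbar p ∈ V ∧
        p * fH (vbar p) / (p * fH (vbar p) + (1 - p) * fL (vbar p)) = pbar)
    (FH FL : ℝ → ℝ)
    (hFH : ∀ x : ℝ, FH x = ∫ v in V ∩ Set.Iic x, fH v)
    (hFL : ∀ x : ℝ, FL x = ∫ v in V ∩ Set.Iic x, fL v) :
    ∀ p2 ∈ Set.Ioo (0:ℝ) 1,
      pbar * (1 - FH (vbar p2)) * (H - c) + (1 - pbar) * (1 - FL (vbar p2)) * (L - c)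
        = (1 - pbar) * (c - L) * (FL (vbar p2) - FH (vbar p2)) ∧
      0 < pbar * (1 - FH (vbar p2)) * (H - c)
            + (1 - pbar) * (1 - FL (vbar p2)) * (L - c) := by

  intro p2 hp2
  obtain ⟨hxV, hbx⟩ := hvbar p2 hp2
  set x0 := vbar p2 with hx0
  have hVm : MeasurableSet V := hVopen.measurableSet
  have hIic : MeasurableSet (V ∩ Set.Iic x0) := hVm.inter measurableSet_Iic
  have hIoi : MeasurableSet (V ∩ Set.Ioi x0) := hVm.inter measurableSet_Ioi
  have hHle : IntegrableOn fH (V ∩ Set.Iic x0) := hfHint.mono_set Set.inter_subset_left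
  have hLle : IntegrableOn fL (V ∩ Set.Iic x0) := hfLint.mono_set Set.inter_subset_left
  have hHgt : IntegrableOn fH (V ∩ Set.Ioi x0) := hfHint.mono_set Set.inter_subset_left
  have hLgt : IntegrableOn fL (V ∩ Set.Ioi x0) := hfLint.mono_set Set.inter_subset_left
  have hdisj : Disjoint (V ∩ Set.Iic x0) (V ∩ Set.Ioi x0) :=
    (Set.Iic_disjoint_Ioi le_rfl).mono Set.inter_subset_right Set.inter_subset_right
  have hcover : (V ∩ Set.Iic x0) ∪ (V ∩ Set.Ioi x0) = V := by
    rw [← Set.inter_union_distrib_left, Set.Iic_union_Ioi, Set.inter_univ]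
  have hsplitH : (∫ v in V ∩ Set.Iic x0, fH v) + (∫ v in V ∩ Set.Ioi x0, fH v) = 1 := by
    rw [← setIntegral_union hdisj hIoi hHle hHgt, hcover, hfHone]
  have hsplitL : (∫ v in V ∩ Set.Iic x0, fL v) + (∫ v in V ∩ Set.Ioi x0, fL v) = 1 := by
    rw [← setIntegral_union hdisj hIoi hLle hLgt, hcover, hfLone]
  -- key: FL x0 - FH x0 > 0
  have hfHx : 0 < fH x0 := hfHpos x0 hxV
  have hfLx : 0 < fL x0 := hfLpos x0 hxV
  have hIccV : ∀ a ∈ V, ∀ b ∈ V, Set.Icc a b ⊆ V := fun a ha b hb => hVconn.out ha hb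
  have hkey : 0 < FL x0 - FH x0 := by
    rcases le_or_gt (fL x0) (fH x0) with hcase | hcase
    · -- show the upper-tail integral is positive
      have hlogx : 0 ≤ Real.log (fH x0 / fL x0) :=
        Real.log_nonneg ((one_le_div hfLx).mpr hcase)
      obtain ⟨v, hvV, hv⟩ := habove (Real.log (fH x0 / fL x0))
      have hx0v : x0 < v := by
        by_contra h
        push_neg at h
        rcases eq_or_lt_of_le h with h' | h'
        · rw [h'] at hv; exact lt_irrefl _ hv
        · exact absurd (hmono hvV hxV h') (not_lt.mpr hv.le)
      have hposon : ∀ w ∈ V ∩ Set.Ioi x0, 0 < fH w - fL w := by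
        rintro w ⟨hwV, hwgt⟩
        have h1 : Real.log (fH x0 / fL x0) < Real.log (fH w / fL w) :=
          hmono hxV hwV hwgt
        have h2 : 0 < Real.log (fH w / fL w) := lt_of_le_of_lt hlogx h1
        have hLw := hfLpos w hwV
        have h3 : 1 < fH w / fL w := by
          by_contra hc
          push_neg at hc
          have := Real.log_le_log_iff (div_pos (hfHpos w hwV) hLw) one_pos
          rw [Real.log_one] at this
          exact absurd (this.mpr hc) (not_le.mpr h2)
        have := (one_lt_div hLw).mp h3
        linarith
      have hsub : Set.Ioc x0 v ⊆ V ∩ Set.Ioi x0 := by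
        intro w hw
        exact ⟨hIccV x0 hxV v hvV ⟨hw.1.le, hw.2⟩, hw.1⟩
      have hintsub : IntervalIntegrable (fun w => fH w - fL w) volume x0 v := by
        apply ContinuousOn.intervalIntegrable
        apply (hfHcont.sub hfLcont).mono
        rw [Set.uIcc_of_le hx0v.le]
        exact hIccV x0 hxV v hvV
      have hpos1 : 0 < ∫ w in Set.Ioc x0 v, (fH w - fL w) := by
        rw [← intervalIntegral.integral_of_le hx0v.le]
        apply intervalIntegral.intervalIntegral_pos_of_pos_on hintsub _ hx0v
        intro w hw
        exact hposon w (hsub ⟨hw.1, hw.2.le⟩)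
      have hmonoset : (∫ w in Set.Ioc x0 v, (fH w - fL w)) ≤
          ∫ w in V ∩ Set.Ioi x0, (fH w - fL w) := by
        apply setIntegral_mono_set (hHgt.sub hLgt)
        · filter_upwards [ae_restrict_mem hIoi] with w hw
          exact (hposon w hw).le
        · exact Filter.Eventually.of_forall hsub
      have htail : 0 < ∫ w in V ∩ Set.Ioi x0, (fH w - fL w) := lt_of_lt_of_le hpos1 hmonoset
      have h1 : (∫ w in V ∩ Set.Ioi x0, (fH w - fL w))
          = (∫ w in V ∩ Set.Ioi x0, fH w) - ∫ w in V ∩ Set.Ioi x0, fL w :=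
        integral_sub hHgt hLgt
      rw [hFL x0, hFH x0]
      linarith [hsplitH, hsplitL, h1 ▸ htail]
    · -- show the lower-tail integral is positive
      have hlogx : Real.log (fH x0 / fL x0) ≤ 0 :=
        Real.log_nonpos (div_pos hfHx hfLx).le ((div_le_one hfLx).mpr hcase.le)
      obtain ⟨v, hvV, hv⟩ := hbelow (Real.log (fH x0 / fL x0))
      have hx0v : v < x0 := by
        by_contra h
        push_neg at h
        rcases eq_or_lt_of_le h with h' | h'
        · rw [← h'] at hv; exact lt_irrefl _ hv
        · exact absurd (hmono hxV hvV h') (not_lt.mpr hv.le)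
      have hposon : ∀ w ∈ V ∩ Set.Iio x0, 0 < fL w - fH w := by
        rintro w ⟨hwV, hwlt⟩
        have h1 : Real.log (fH w / fL w) < Real.log (fH x0 / fL x0) :=
          hmono hwV hxV hwlt
        have h2 : Real.log (fH w / fL w) < 0 := lt_of_lt_of_le h1 hlogx
        have hLw := hfLpos w hwV
        have h3 : fH w / fL w < 1 := by
          by_contra hc
          push_neg at hc
          have := Real.log_le_log_iff one_pos (div_pos (hfHpos w hwV) hLw)
          rw [Real.log_one] at this
          exact absurd (this.mpr hc) (not_le.mpr h2)
        have := (div_lt_one hLw).mp h3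
        linarith
      have hnonneg : ∀ w ∈ V ∩ Set.Iic x0, 0 ≤ fL w - fH w := by
        rintro w ⟨hwV, hwle⟩
        rcases eq_or_lt_of_le (Set.mem_Iic.mp hwle) with h' | h'
        · subst h'; linarith
        · exact (hposon w ⟨hwV, h'⟩).le
      have hsub : Set.Ioc v x0 ⊆ V ∩ Set.Iic x0 := by
        intro w hw
        exact ⟨hIccV v hvV x0 hxV ⟨hw.1.le, hw.2⟩, hw.2⟩
      have hintsub : IntervalIntegrable (fun w => fL w - fH w) volume v x0 := by
        apply ContinuousOn.intervalIntegrable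
        apply (hfLcont.sub hfHcont).mono
        rw [Set.uIcc_of_le hx0v.le]
        exact hIccV v hvV x0 hxV
      have hpos1 : 0 < ∫ w in Set.Ioc v x0, (fL w - fH w) := by
        rw [← intervalIntegral.integral_of_le hx0v.le]
        apply intervalIntegral.intervalIntegral_pos_of_pos_on hintsub _ hx0v
        intro w hw
        exact hposon w ⟨(hsub ⟨hw.1, hw.2.le⟩).1, hw.2⟩
      have hmonoset : (∫ w in Set.Ioc v x0, (fL w - fH w)) ≤
          ∫ w in V ∩ Set.Iic x0, (fL w - fH w) := by
        apply setIntegral_mono_set (hLle.sub hHle)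
        · filter_upwards [ae_restrict_mem hIic] with w hw
          exact hnonneg w hw
        · exact Filter.Eventually.of_forall hsub
      have htail : 0 < ∫ w in V ∩ Set.Iic x0, (fL w - fH w) := lt_of_lt_of_le hpos1 hmonoset
      have h1 : (∫ w in V ∩ Set.Iic x0, (fL w - fH w))
          = (∫ w in V ∩ Set.Iic x0, fL w) - ∫ w in V ∩ Set.Iic x0, fH w :=
        integral_sub hLle hHle
      rw [hFL x0, hFH x0]
      linarith [h1 ▸ htail]
  -- algebra
  have hHL : (0:ℝ) < H - L := by linarith
  have h1 : pbar * (H - c) = (1 - pbar) * (c - L) := by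
    rw [hpbar]; field_simp; ring
  have hpbarpos : 0 < pbar := by rw [hpbar]; exact div_pos (by linarith) hHL
  have hpbarlt : pbar < 1 := by
    rw [hpbar, div_lt_one hHL]; linarith
  constructor
  · linear_combination (1 - FH x0) * h1
  · have : pbar * (1 - FH x0) * (H - c) + (1 - pbar) * (1 - FL x0) * (L - c)
        = (1 - pbar) * (c - L) * (FL x0 - FH x0) := by
      linear_combination (1 - FH x0) * h1
    rw [this]
    have h2 : 0 < 1 - pbar := by linarith
    exact mul_pos (mul_pos h2 (by linarith)) hkey
end

section
/- Let p̄ ∈ (0,1), let φ : [p̄,1] → ℝ be nonnegative and integrable, let μ : [p̄,1] → [0,1] be measurable, let r′ ∈ (p̄, 1], and let g : [p̄,1] → ℝ be of the form g(b) = s(b)·(b − p̄) for some weakly increasing function s : (p̄,1] → ℝ, with all integrals below defined. If ∫_{p̄}^{r′} (b − p̄)·(1 − μ(b))·φ(b) db = ∫_{r′}^{1} (b − p̄)·μ(b)·φ(b) db, then ∫_{r′}^{1} g(b)·μ(b)·φ(b) db ≥ ∫_{p̄}^{r′} g(b)·(1 − μ(b))·φ(b) db. -/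
/-- Exchange inequality. If `g(b) = s(b)(b - p̄)` with `s` weakly
increasing on `(p̄,1]`, `φ ≥ 0`, `μ ∈ [0,1]`, and the masses balance:
`∫_{p̄}^{r'} (b - p̄)(1 - μ(b))φ(b) db = ∫_{r'}^{1} (b - p̄)μ(b)φ(b) db`,
then `∫_{r'}^{1} g μ φ ≥ ∫_{p̄}^{r'} g (1 - μ) φ`. -/
theorem stmt_15 (pbar r' : ℝ) (hpbar : pbar ∈ Set.Ioo (0:ℝ) 1)
    (hr' : r' ∈ Set.Ioc pbar 1)
    (φ μ s g : ℝ → ℝ)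
    (hφnn : ∀ b ∈ Set.Icc pbar 1, 0 ≤ φ b)
    (hφint : IntervalIntegrable φ MeasureTheory.volume pbar 1)
    (hμ : ∀ b ∈ Set.Icc pbar 1, μ b ∈ Set.Icc (0:ℝ) 1)
    (hμmeas : Measurable μ)
    (hs : MonotoneOn s (Set.Ioc pbar 1))
    (hg : ∀ b ∈ Set.Icc pbar 1, g b = s b * (b - pbar))
    (hint1 : IntervalIntegrable (fun b => (b - pbar) * (1 - μ b) * φ b)
        MeasureTheory.volume pbar r')
    (hint2 : IntervalIntegrable (fun b => (b - pbar) * μ b * φ b)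
        MeasureTheory.volume r' 1)
    (hint3 : IntervalIntegrable (fun b => g b * μ b * φ b)
        MeasureTheory.volume r' 1)
    (hint4 : IntervalIntegrable (fun b => g b * (1 - μ b) * φ b)
        MeasureTheory.volume pbar r')
    (hbal : (∫ b in pbar..r', (b - pbar) * (1 - μ b) * φ b)
        = ∫ b in r'..(1:ℝ), (b - pbar) * μ b * φ b) :
    (∫ b in r'..(1:ℝ), g b * μ b * φ b) ≥ ∫ b in pbar..r', g b * (1 - μ b) * φ b := by
  obtain ⟨hp0, hp1⟩ := hpbar
  obtain ⟨hpr, hr1⟩ := hr'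
  have hr'mem : r' ∈ Set.Ioc pbar 1 := ⟨hpr, hr1⟩
  have h1 : (∫ b in r'..1, s r' * ((b - pbar) * μ b * φ b))
      ≤ ∫ b in r'..1, g b * μ b * φ b := by
    apply intervalIntegral.integral_mono_on hr1 (hint2.const_mul _) hint3
    intro b hb
    have hbI : b ∈ Set.Icc pbar 1 := ⟨le_trans hpr.le hb.1, hb.2⟩
    have hbI' : b ∈ Set.Ioc pbar 1 := ⟨lt_of_lt_of_le hpr hb.1, hb.2⟩
    have hnn : 0 ≤ (b - pbar) * μ b * φ b := by
      have := (hμ b hbI).1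
      have := hφnn b hbI
      have : (0:ℝ) ≤ b - pbar := by linarith [hbI'.1.le]
      positivity
    have hss : s r' ≤ s b := hs hr'mem hbI' hb.1
    calc s r' * ((b - pbar) * μ b * φ b) ≤ s b * ((b - pbar) * μ b * φ b) :=
          mul_le_mul_of_nonneg_right hss hnn
      _ = g b * μ b * φ b := by rw [hg b hbI]; ring
  have h2 : (∫ b in pbar..r', g b * (1 - μ b) * φ b)
      ≤ ∫ b in pbar..r', s r' * ((b - pbar) * (1 - μ b) * φ b) := by
    apply intervalIntegral.integral_mono_on hpr.le hint4 (hint1.const_mul _)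
    intro b hb
    have hbI : b ∈ Set.Icc pbar 1 := ⟨hb.1, le_trans hb.2 hr1⟩
    rcases eq_or_lt_of_le hb.1 with heq | hlt
    · rw [hg b hbI, ← heq]; simp
    · have hbI' : b ∈ Set.Ioc pbar 1 := ⟨hlt, hbI.2⟩
      have hnn : 0 ≤ (b - pbar) * (1 - μ b) * φ b := by
        have := (hμ b hbI).2
        have := hφnn b hbI
        have : (0:ℝ) ≤ b - pbar := by linarith
        have : (0:ℝ) ≤ 1 - μ b := by linarith [(hμ b hbI).2]
        positivity
      have hss : s b ≤ s r' := hs hbI' hr'mem hb.2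
      calc g b * (1 - μ b) * φ b = s b * ((b - pbar) * (1 - μ b) * φ b) := by
            rw [hg b hbI]; ring
        _ ≤ s r' * ((b - pbar) * (1 - μ b) * φ b) :=
            mul_le_mul_of_nonneg_right hss hnn
  calc (∫ b in pbar..r', g b * (1 - μ b) * φ b)
      ≤ ∫ b in pbar..r', s r' * ((b - pbar) * (1 - μ b) * φ b) := h2
    _ = s r' * ∫ b in pbar..r', (b - pbar) * (1 - μ b) * φ b := by
        rw [intervalIntegral.integral_const_mul]
    _ = s r' * ∫ b in r'..1, (b - pbar) * μ b * φ b := by rw [hbal]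
    _ = ∫ b in r'..1, s r' * ((b - pbar) * μ b * φ b) := by
        rw [intervalIntegral.integral_const_mul]
    _ ≤ ∫ b in r'..1, g b * μ b * φ b := h1
end

section
/- Let p̄ ∈ (0,1), let φ : [0,1] → ℝ be continuous and strictly positive on (0,1) with ∫_{p̄}^{1} (b − p̄)·φ(b) db ≥ ∫_{0}^{p̄} (p̄ − b)·φ(b) db, and let Φ(x) := ∫_0^x φ(b) db. Let W : [p̄,1] → ℝ be weakly increasing with W(p̄) > 0, and suppose there is K > 0 with W(x) − W(p̄) ≤ K·(x − p̄) for all x ∈ [p̄,1]. For ε ∈ (0, p̄) let r(ε) ∈ [p̄,1] be the unique solution of ∫_{p̄}^{r(ε)} (b − p̄)·φ(b) db = ∫_{p̄−ε}^{p̄} (p̄ − b)·φ(b) db. Then there exists ε ∈ (0, p̄) such that W(p̄)·(Φ(p̄) − Φ(p̄ − ε)) > (W(r(ε)) − W(p̄))·(Φ(r(ε)) − Φ(p̄)). -/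
set_option maxHeartbeats 1000000
open MeasureTheory Set


/-- First-order gain vs second-order loss. With `φ` a continuous
density, strictly positive on `(0,1)`, `Φ` its CDF, `W` weakly increasing
with `W(p̄) > 0` and `W(x) - W(p̄) ≤ K (x - p̄)`, and `r(ε)` solving the
balance equation for the pooling interval `[p̄ - ε, r(ε)]`, there exists
`ε ∈ (0, p̄)` such that
`W(p̄)(Φ(p̄) - Φ(p̄-ε)) > (W(r(ε)) - W(p̄))(Φ(r(ε)) - Φ(p̄))`. -/
theorem stmt_16 (pbar : ℝ) (hpbar : pbar ∈ Set.Ioo (0:ℝ) 1)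
    (φ : ℝ → ℝ) (hφcont : ContinuousOn φ (Set.Icc 0 1))
    (hφpos : ∀ b ∈ Set.Ioo (0:ℝ) 1, 0 < φ b)
    (hbal0 : (∫ b in (0:ℝ)..pbar, (pbar - b) * φ b) ≤ ∫ b in pbar..(1:ℝ), (b - pbar) * φ b)
    (Φ : ℝ → ℝ) (hΦ : ∀ x : ℝ, Φ x = ∫ b in (0:ℝ)..x, φ b)
    (W : ℝ → ℝ) (hW : MonotoneOn W (Set.Icc pbar 1)) (hWp : 0 < W pbar)
    (K : ℝ) (hK : 0 < K)
    (hLip : ∀ x ∈ Set.Icc pbar 1, W x - W pbar ≤ K * (x - pbar))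
    (r : ℝ → ℝ)
    (hr : ∀ ε ∈ Set.Ioo (0:ℝ) pbar, r ε ∈ Set.Icc pbar 1 ∧
        (∫ b in pbar..(r ε), (b - pbar) * φ b)
          = ∫ b in (pbar - ε)..pbar, (pbar - b) * φ b) :
    ∃ ε ∈ Set.Ioo (0:ℝ) pbar,
      W pbar * (Φ pbar - Φ (pbar - ε)) > (W (r ε) - W pbar) * (Φ (r ε) - Φ pbar) := by
  obtain ⟨hp0, hp1⟩ := hpbar
  set δ : ℝ := min pbar (1 - pbar) / 2 with hδdef
  have hmin0 : 0 < min pbar (1 - pbar) := lt_min hp0 (by linarith)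
  have hδ0 : 0 < δ := by rw [hδdef]; positivity
  have hδp : δ ≤ pbar / 2 := by
    have := min_le_left pbar (1 - pbar); rw [hδdef]; linarith
  have hδ1 : δ ≤ (1 - pbar) / 2 := by
    have := min_le_right pbar (1 - pbar); rw [hδdef]; linarith
  have hsub : Set.Icc δ (1 - δ) ⊆ Set.Icc (0:ℝ) 1 :=
    Set.Icc_subset_Icc (by linarith) (by linarith)
  have hsubo : Set.Icc δ (1 - δ) ⊆ Set.Ioo (0:ℝ) 1 := fun x hx =>
    ⟨by have := hx.1; linarith, by have := hx.2; linarith⟩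
  -- φ nonnegative on [0,1]
  have hφ0 : ∀ x ∈ Set.Icc (0:ℝ) 1, 0 ≤ φ x := by
    intro x hx
    have hxcl : x ∈ closure (Set.Ioo (0:ℝ) 1) := by
      rw [closure_Ioo one_ne_zero.symm]; exact hx
    have hne : (nhdsWithin x (Set.Ioo (0:ℝ) 1)).NeBot :=
      mem_closure_iff_nhdsWithin_neBot.mp hxcl
    have ht : Filter.Tendsto φ (nhdsWithin x (Set.Ioo (0:ℝ) 1)) (nhds (φ x)) :=
      (hφcont x hx).mono Set.Ioo_subset_Icc_self
    refine ge_of_tendsto ht ?_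
    filter_upwards [self_mem_nhdsWithin] with y hy
    exact (hφpos y hy).le
  -- integrability helper
  have hci : ∀ ψ : ℝ → ℝ, ContinuousOn ψ (Set.Icc 0 1) → ∀ a ∈ Set.Icc (0:ℝ) 1,
      ∀ b ∈ Set.Icc (0:ℝ) 1, IntervalIntegrable ψ volume a b := by
    intro ψ hψ a ha b hb
    refine (hψ.mono ?_).intervalIntegrable
    rw [show Set.Icc (0:ℝ) 1 = Set.uIcc (0:ℝ) 1 from (Set.uIcc_of_le zero_le_one).symm] at ha hb ⊢
    exact Set.uIcc_subset_uIcc ha hb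
  have hcg : ContinuousOn (fun b => (b - pbar) * φ b) (Set.Icc 0 1) :=
    ((continuous_id.sub continuous_const).continuousOn).mul hφcont
  have hch : ContinuousOn (fun b => (pbar - b) * φ b) (Set.Icc 0 1) :=
    ((continuous_const.sub continuous_id).continuousOn).mul hφcont
  -- quadratic integral formula
  have hquad : ∀ c u : ℝ, (∫ b in pbar..u, c * (b - pbar)) = c * (u - pbar)^2 / 2 := by
    intro c u
    rw [intervalIntegral.integral_const_mul]
    have h := intervalIntegral.integral_comp_sub_right (a := pbar) (b := u) (fun x => x) pbar
    rw [show (fun x : ℝ => x - pbar) = (fun x => (fun y : ℝ => y) (x - pbar)) from rfl] at *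
    rw [h, integral_id]
    ring
  -- min and max of φ
  obtain ⟨xc, hxc, hc⟩ := isCompact_Icc.exists_isMinOn (Set.nonempty_Icc.mpr (by linarith))
    (hφcont.mono hsub)
  set c := φ xc with hcdef
  have hc0 : 0 < c := hφpos xc (hsubo hxc)
  obtain ⟨xM, hxM, hM⟩ := isCompact_Icc.exists_isMaxOn (Set.nonempty_Icc.mpr zero_le_one) hφcont
  set M := φ xM with hMdef
  have hM0 : 0 < M := lt_of_lt_of_le hc0 (hM (hsub hxc))
  -- A0 and ε
  have h1δp : pbar ≤ 1 - δ := by linarith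
  set A0 : ℝ := c * (1 - δ - pbar)^2 / 2 with hA0def
  have hA00 : 0 < A0 := by
    rw [hA0def]
    have : 0 < 1 - δ - pbar := by linarith
    positivity
  set ε : ℝ := min (min (pbar - δ) (W pbar * c^2 / (4 * K * M^2))) (Real.sqrt (A0 / M) / 2)
    with hεdef
  have hε0 : 0 < ε := by
    rw [hεdef]
    refine lt_min (lt_min (by linarith) (by positivity)) (by positivity)
  have hεδ : ε ≤ pbar - δ := le_trans (min_le_left _ _) (min_le_left _ _)
  have hεp : ε < pbar := by linarith
  have hε4 : 4 * K * M^2 * ε ≤ W pbar * c^2 := by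
    have h : ε ≤ W pbar * c ^ 2 / (4 * K * M ^ 2) := by
      rw [hεdef]
      exact le_trans (min_le_left _ _) (min_le_right _ _)
    rw [le_div_iff₀ (by positivity)] at h
    linarith
  have hεsq : M * ε^2 ≤ A0 / 4 := by
    have h : ε ≤ Real.sqrt (A0 / M) / 2 := min_le_right _ _
    have h2 : ε^2 ≤ (Real.sqrt (A0 / M) / 2)^2 := by
      exact pow_le_pow_left₀ hε0.le h 2
    rw [div_pow, Real.sq_sqrt (by positivity : (0:ℝ) ≤ A0 / M)] at h2
    have h3 := mul_le_mul_of_nonneg_left h2 hM0.le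
    calc M * ε^2 ≤ M * (A0 / M / 2 ^ 2) := h3
      _ = A0 / 4 := by field_simp; ring
  refine ⟨ε, ⟨hε0, hεp⟩, ?_⟩
  obtain ⟨⟨hrl, hru⟩, hbal⟩ := hr ε ⟨hε0, hεp⟩
  -- memberships
  have hm0 : (0:ℝ) ∈ Set.Icc (0:ℝ) 1 := Set.left_mem_Icc.mpr zero_le_one
  have hmp : pbar ∈ Set.Icc (0:ℝ) 1 := ⟨hp0.le, hp1.le⟩
  have hmpε : pbar - ε ∈ Set.Icc (0:ℝ) 1 := ⟨by linarith, by linarith⟩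
  have hmr : r ε ∈ Set.Icc (0:ℝ) 1 := ⟨le_trans hp0.le hrl, hru⟩
  have hm1δ : 1 - δ ∈ Set.Icc (0:ℝ) 1 := ⟨by linarith, by linarith⟩
  -- Φ differences
  have hΦsub : ∀ a ∈ Set.Icc (0:ℝ) 1, ∀ b ∈ Set.Icc (0:ℝ) 1,
      Φ b - Φ a = ∫ x in a..b, φ x := by
    intro a ha b hb
    rw [hΦ a, hΦ b]
    exact intervalIntegral.integral_interval_sub_left (hci φ hφcont 0 hm0 b hb)
      (hci φ hφcont 0 hm0 a ha)
  -- gain lower bound : Φ pbar - Φ (pbar - ε) ≥ c * ε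
  have hG : c * ε ≤ Φ pbar - Φ (pbar - ε) := by
    rw [hΦsub _ hmpε _ hmp]
    have hmono : (∫ x in (pbar - ε)..pbar, c) ≤ ∫ x in (pbar - ε)..pbar, φ x := by
      refine intervalIntegral.integral_mono_on (by linarith) intervalIntegrable_const
        (hci φ hφcont _ hmpε _ hmp) ?_
      intro x hx
      exact hc ⟨by have := hx.1; linarith, by have := hx.2; linarith⟩
    rw [intervalIntegral.integral_const, smul_eq_mul] at hmono
    linarith [hmono]
  -- balance RHS upper bound : ∫ (pbar - b) φ ≤ M * ε^2
  have hA : (∫ b in (pbar - ε)..pbar, (pbar - b) * φ b) ≤ M * ε^2 := by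
    have hmono : (∫ b in (pbar - ε)..pbar, (pbar - b) * φ b)
        ≤ ∫ _b in (pbar - ε)..pbar, ε * M := by
      refine intervalIntegral.integral_mono_on (by linarith)
        (hci _ hch _ hmpε _ hmp) intervalIntegrable_const ?_
      intro x hx
      have hx01 : x ∈ Set.Icc (0:ℝ) 1 := ⟨by have := hx.1; linarith, by have := hx.2; linarith⟩
      exact mul_le_mul (by have := hx.1; linarith) (hM hx01) (hφ0 x hx01) hε0.le
    rw [intervalIntegral.integral_const, smul_eq_mul] at hmono
    calc (∫ b in (pbar - ε)..pbar, (pbar - b) * φ b) ≤ (pbar - (pbar - ε)) * (ε * M) := hmono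
      _ = M * ε^2 := by ring
  -- r ε ≤ 1 - δ
  have hrle : r ε ≤ 1 - δ := by
    by_contra hcon
    push_neg at hcon
    have hsplit : (∫ b in pbar..(1 - δ), (b - pbar) * φ b)
        + (∫ b in (1 - δ)..(r ε), (b - pbar) * φ b)
        = ∫ b in pbar..(r ε), (b - pbar) * φ b :=
      intervalIntegral.integral_add_adjacent_intervals (hci _ hcg _ hmp _ hm1δ)
        (hci _ hcg _ hm1δ _ hmr)
    have h1 : A0 ≤ ∫ b in pbar..(1 - δ), (b - pbar) * φ b := by
      have hmono : (∫ b in pbar..(1 - δ), c * (b - pbar))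
          ≤ ∫ b in pbar..(1 - δ), (b - pbar) * φ b := by
        refine intervalIntegral.integral_mono_on h1δp
          ((continuous_const.mul (continuous_id.sub continuous_const)).intervalIntegrable _ _)
          (hci _ hcg _ hmp _ hm1δ) ?_
        intro x hx
        have hxδ : x ∈ Set.Icc δ (1 - δ) := ⟨by have := hx.1; linarith, hx.2⟩
        calc c * (x - pbar) = (x - pbar) * c := by ring
          _ ≤ (x - pbar) * φ x :=
            mul_le_mul_of_nonneg_left (hc hxδ) (by have := hx.1; linarith)
      rw [hquad] at hmono
      rw [hA0def]
      linarith
    have h2 : 0 ≤ ∫ b in (1 - δ)..(r ε), (b - pbar) * φ b := by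
      refine intervalIntegral.integral_nonneg hcon.le ?_
      intro x hx
      have hx01 : x ∈ Set.Icc (0:ℝ) 1 := ⟨by have := hx.1; linarith, le_trans hx.2 hru⟩
      exact mul_nonneg (by have := hx.1; linarith) (hφ0 x hx01)
    have : A0 ≤ M * ε^2 := by
      rw [← hbal] at hA
      linarith
    linarith
  -- quadratic bound: c * (r ε - pbar)^2 ≤ 2 * M * ε^2
  have hq : c * (r ε - pbar)^2 ≤ 2 * M * ε^2 := by
    have hmono : (∫ b in pbar..(r ε), c * (b - pbar))
        ≤ ∫ b in pbar..(r ε), (b - pbar) * φ b := by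
      refine intervalIntegral.integral_mono_on hrl
        ((continuous_const.mul (continuous_id.sub continuous_const)).intervalIntegrable _ _)
        (hci _ hcg _ hmp _ hmr) ?_
      intro x hx
      have hxδ : x ∈ Set.Icc δ (1 - δ) := ⟨by have := hx.1; linarith, le_trans hx.2 hrle⟩
      calc c * (x - pbar) = (x - pbar) * c := by ring
        _ ≤ (x - pbar) * φ x :=
          mul_le_mul_of_nonneg_left (hc hxδ) (by have := hx.1; linarith)
    rw [hquad, hbal] at hmono
    nlinarith [hA, hmono]
  -- loss upper bound
  have hΦr : Φ (r ε) - Φ pbar ≤ M * (r ε - pbar) := by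
    rw [hΦsub _ hmp _ hmr]
    have hmono : (∫ x in pbar..(r ε), φ x) ≤ ∫ _x in pbar..(r ε), M := by
      refine intervalIntegral.integral_mono_on hrl (hci φ hφcont _ hmp _ hmr)
        intervalIntegrable_const ?_
      intro x hx
      exact hM ⟨le_trans hp0.le hx.1, le_trans hx.2 hru⟩
    rw [intervalIntegral.integral_const, smul_eq_mul] at hmono
    linarith [hmono]
  have hΦr0 : 0 ≤ Φ (r ε) - Φ pbar := by
    rw [hΦsub _ hmp _ hmr]
    refine intervalIntegral.integral_nonneg hrl ?_
    intro x hx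
    exact hφ0 x ⟨le_trans hp0.le hx.1, le_trans hx.2 hru⟩
  have hWr : W (r ε) - W pbar ≤ K * (r ε - pbar) := hLip _ ⟨hrl, hru⟩
  have hloss : (W (r ε) - W pbar) * (Φ (r ε) - Φ pbar) ≤ K * M * (r ε - pbar)^2 := by
    calc (W (r ε) - W pbar) * (Φ (r ε) - Φ pbar)
        ≤ (K * (r ε - pbar)) * (M * (r ε - pbar)) :=
          mul_le_mul hWr hΦr hΦr0 (mul_nonneg hK.le (by linarith))
      _ = K * M * (r ε - pbar)^2 := by ring
  -- final comparison
  have key : c * ((W (r ε) - W pbar) * (Φ (r ε) - Φ pbar))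
      < c * (W pbar * (Φ pbar - Φ (pbar - ε))) := by
    have f1 := mul_le_mul_of_nonneg_left hq (le_of_lt (mul_pos hK hM0))
    have f2 := mul_le_mul_of_nonneg_left hloss hc0.le
    have f3 := mul_le_mul_of_nonneg_right hε4 hε0.le
    have f4 := mul_le_mul_of_nonneg_left hG (le_of_lt (mul_pos hWp hc0))
    have f5 : 0 < W pbar * c ^ 2 * ε := by positivity
    linarith [f1, f2, f3, f4, f5]
  exact lt_of_mul_lt_mul_left key hc0.le
end
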